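/- arXiv:1209.2194 — 8 statements merged into one kernel-verified Lean document; each statement's English description precedes it below -/
import Mathlib

section
/- For any nonnegative n×n real matrix A, κ(A) ≥ 0. Moreover, suppose A is symmetric and nonnegative, let G(A) be the simple graph on {1,…,n} that has an edge {i,j} (for i ≠ j) exactly when a_{ij} > 0, assume G(A) is connected with diameter D, and suppose η ∈ (0,1] satisfies a_{ij} ≥ η for every edge {i,j} of G(A). Then κ(A) ≥ η/(n(D+1)). -/
open Finset

/-!
Let `x` be a unit vector and `m` an index. Some coordinate satisfies `x i ² ≥ 1 / n`, and a
shortest path `m = v₀, v₁, …, v_L = i` in `G(A)` has `L ≤ D`. Writing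
`x i = x m + ∑ (x v_{k+1} - x v_k)` and applying Cauchy–Schwarz to these `L + 1` terms gives
`x i ² ≤ (D + 1) (x m ² + ∑ (x v_{k+1} - x v_k) ²)`. The edges of a path are distinct and each
carries weight at least `η ≤ 1`, so `η x i ²` is at most `(D + 1)` times the value of the sieve
functional at `(m, x)`.
-/

theorem List.sq_sum_le_length_mul_sum_sq {α : Type*} [CommSemiring α] [LinearOrder α]
    [IsStrictOrderedRing α] [ExistsAddOfLE α] (l : List α) :
    l.sum ^ 2 ≤ l.length * (l.map (· ^ 2)).sum := by
  have h := sq_sum_le_card_mul_sum_sq (s := univ) (f := fun i : Fin l.length => l[i.1])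
  rwa [Fin.sum_univ_getElem, card_univ, Fintype.card_fin, Fin.sum_univ_fun_getElem l (· ^ 2)] at h

namespace SimpleGraph.Walk

variable {V : Type*} {G : SimpleGraph V} {u v : V}

theorem sum_darts_sub {α : Type*} [AddCommGroup α] (x : V → α) (p : G.Walk u v) :
    (p.darts.map fun d => x d.snd - x d.fst).sum = x v - x u := by
  induction p with
  | nil => simp
  | cons h q ih => simp only [darts_cons, List.map_cons, List.sum_cons, ih]; abel

theorem sq_le_length_add_one_mul (x : V → ℝ) (p : G.Walk u v) :
    x v ^ 2 ≤ (p.length + 1) * (x u ^ 2 + (p.darts.map fun d => (x d.snd - x d.fst) ^ 2).sum) := by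
  have h := List.sq_sum_le_length_mul_sum_sq (x u :: p.darts.map fun d => x d.snd - x d.fst)
  simp only [List.sum_cons, sum_darts_sub, add_sub_cancel, List.length_cons, List.length_map,
    length_darts, List.map_cons, List.map_map] at h
  exact_mod_cast h

theorem IsPath.sum_darts_le_sum_lt [LinearOrder V] [Fintype V] {p : G.Walk u v} (hp : p.IsPath)
    {f g : V → V → ℝ} (hf : ∀ i j, f i j = f j i) (hg : ∀ i j, 0 ≤ g i j)
    (hfg : ∀ i j, i < j → G.Adj i j → f i j ≤ g i j) :
    (p.darts.map fun d => f d.fst d.snd).sum ≤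
      ∑ q ∈ univ.filter (fun q : V × V => q.1 < q.2), g q.1 q.2 := by
  classical
  let F : Sym2 V → ℝ := Sym2.lift ⟨f, hf⟩
  let e : Sym2 V → V × V := fun s => (Sym2.sortEquiv s : V × V)
  have he : Function.Injective e := Subtype.val_injective.comp Sym2.sortEquiv.injective
  have hedge : ∀ s ∈ p.edges, (e s).1 < (e s).2 ∧ F s ≤ g (e s).1 (e s).2 := by
    intro s hs
    have hs' : s(s.inf, s.sup) = s := Sym2.sortEquiv.symm_apply_apply s
    have hadj : G.Adj s.inf s.sup := by
      rw [← SimpleGraph.mem_edgeSet, hs']; exact p.edges_subset_edgeSet hs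
    have hlt : s.inf < s.sup := s.inf_le_sup.lt_of_ne hadj.ne
    exact ⟨hlt, (congrArg F hs').symm.trans_le (hfg _ _ hlt hadj)⟩
  calc (p.darts.map fun d => f d.fst d.snd).sum
      = ∑ s ∈ p.edges.toFinset, F s := by
        rw [List.sum_toFinset F hp.edges_nodup, edges, List.map_map]; rfl
    _ ≤ ∑ s ∈ p.edges.toFinset, g (e s).1 (e s).2 :=
        sum_le_sum fun s hs => (hedge s (List.mem_toFinset.mp hs)).2
    _ = ∑ q ∈ p.edges.toFinset.image e, g q.1 q.2 :=
        (sum_image (f := fun q => g q.1 q.2) fun s _ t _ h => he h).symm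
    _ ≤ ∑ q ∈ univ.filter (fun q : V × V => q.1 < q.2), g q.1 q.2 := by
        refine sum_le_sum_of_subset_of_nonneg ?_ fun q _ _ => hg q.1 q.2
        intro q hq
        obtain ⟨s, hs, rfl⟩ := mem_image.mp hq
        exact mem_filter.mpr ⟨mem_univ _, (hedge s (List.mem_toFinset.mp hs)).1⟩

end SimpleGraph.Walk

section Sieve

variable {ι : Type*} [Fintype ι] [LinearOrder ι]

def sieveForm (A : Matrix ι ι ℝ) (x : ι → ℝ) : ℝ :=
  ∑ p ∈ univ.filter (fun p : ι × ι => p.1 < p.2), A p.1 p.2 * (x p.1 - x p.2) ^ 2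

variable {A : Matrix ι ι ℝ}

theorem sieveForm_nonneg (hA : ∀ i j, 0 ≤ A i j) (x : ι → ℝ) : 0 ≤ sieveForm A x :=
  sum_nonneg fun _ _ => mul_nonneg (hA _ _) (sq_nonneg _)

theorem SimpleGraph.Walk.IsPath.mul_sq_le_sieveForm {G : SimpleGraph ι} {η : ℝ}
    (hA : ∀ i j, 0 ≤ A i j) (hGA : ∀ i j, G.Adj i j → η ≤ A i j) (hη₀ : 0 ≤ η) (hη₁ : η ≤ 1)
    (x : ι → ℝ) {u v : ι} {p : G.Walk u v} (hp : p.IsPath) :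
    η * x v ^ 2 ≤ (p.length + 1) * (x u ^ 2 + sieveForm A x) := by
  set S := (p.darts.map fun d => (x d.snd - x d.fst) ^ 2).sum
  have hS : η * S ≤ sieveForm A x := by
    rw [← List.sum_map_mul_left]
    refine hp.sum_darts_le_sum_lt (f := fun i j => η * (x j - x i) ^ 2)
      (g := fun i j => A i j * (x i - x j) ^ 2) (fun i j => by rw [sub_sq_comm])
      (fun i j => mul_nonneg (hA i j) (sq_nonneg _)) ?_
    intro i j _ hij
    rw [sub_sq_comm]
    exact mul_le_mul_of_nonneg_right (hGA i j hij) (sq_nonneg _)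
  have hu : η * x u ^ 2 ≤ x u ^ 2 := mul_le_of_le_one_left (sq_nonneg _) hη₁
  calc η * x v ^ 2 ≤ η * ((p.length + 1) * (x u ^ 2 + S)) :=
        mul_le_mul_of_nonneg_left (p.sq_le_length_add_one_mul x) hη₀
    _ = (p.length + 1) * (η * x u ^ 2 + η * S) := by ring
    _ ≤ (p.length + 1) * (x u ^ 2 + sieveForm A x) := by gcongr

theorem div_card_mul_diam_le_sq_add_sieveForm {G : SimpleGraph ι} {η : ℝ}
    (hA : ∀ i j, 0 ≤ A i j) (hG : G.Connected) (hGA : ∀ i j, G.Adj i j → η ≤ A i j)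
    (hη₀ : 0 ≤ η) (hη₁ : η ≤ 1) {x : ι → ℝ} (hx : ∑ i, x i ^ 2 = 1) (m : ι) :
    η / (Fintype.card ι * (G.diam + 1)) ≤ x m ^ 2 + sieveForm A x := by
  have := hG.nonempty
  have hcard : (0 : ℝ) < Fintype.card ι := by exact_mod_cast Fintype.card_pos
  obtain ⟨i, -, hi⟩ : ∃ i ∈ univ, 1 / (Fintype.card ι : ℝ) ≤ x i ^ 2 := by
    refine exists_le_of_sum_le univ_nonempty ?_
    rw [hx, sum_const, card_univ, nsmul_eq_mul, mul_one_div_cancel hcard.ne']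
  obtain ⟨p, hp, hlen⟩ := hG.exists_path_of_dist m i
  have hpD : (p.length : ℝ) ≤ G.diam := by
    exact_mod_cast hlen ▸ G.dist_le_diam (SimpleGraph.connected_iff_ediam_ne_top.mp hG)
  have hval : 0 ≤ x m ^ 2 + sieveForm A x := add_nonneg (sq_nonneg _) (sieveForm_nonneg hA x)
  rw [div_le_iff₀ (by positivity)]
  calc η ≤ Fintype.card ι * (η * x i ^ 2) := by
        rw [div_le_iff₀ hcard] at hi; nlinarith
    _ ≤ Fintype.card ι * ((p.length + 1) * (x m ^ 2 + sieveForm A x)) :=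
        mul_le_mul_of_nonneg_left (hp.mul_sq_le_sieveForm hA hGA hη₀ hη₁ x) hcard.le
    _ ≤ Fintype.card ι * ((G.diam + 1) * (x m ^ 2 + sieveForm A x)) := by gcongr
    _ = (x m ^ 2 + sieveForm A x) * (Fintype.card ι * (G.diam + 1)) := by ring

end Sieve

/-- For any nonnegative `n×n` matrix `A`, the sieve constant
`κ(A) = min { x_m² + Σ_{k<l} a_{kl}(x_k - x_l)² : m, ‖x‖₂ = 1 }` is nonnegative;
and if moreover `A` is symmetric, its graph `G(A)` is connected with diameter `D`,
and `η ∈ (0,1]` lower-bounds the entries of `A` on edges of `G(A)`, then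
`κ(A) ≥ η / (n (D+1))`. -/
theorem stmt4 (n : ℕ) (A : Matrix (Fin n) (Fin n) ℝ) (hA : ∀ i j, 0 ≤ A i j) (κ : ℝ)
    (hκ : IsLeast {y : ℝ | ∃ (m : Fin n) (x : Fin n → ℝ), (∑ i, (x i) ^ 2 = 1) ∧
      y = (x m) ^ 2 + ∑ p ∈ Finset.univ.filter (fun p : Fin n × Fin n => p.1 < p.2),
        A p.1 p.2 * (x p.1 - x p.2) ^ 2} κ) :
    0 ≤ κ ∧
      ∀ (G : SimpleGraph (Fin n)), A.IsSymm →
        (∀ i j, G.Adj i j ↔ i ≠ j ∧ 0 < A i j) → G.Connected →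
        ∀ D : ℕ, G.diam = D →
        ∀ η : ℝ, 0 < η → η ≤ 1 → (∀ i j, G.Adj i j → η ≤ A i j) →
        η / (n * (D + 1)) ≤ κ := by
  obtain ⟨⟨m, x, hx, rfl⟩, -⟩ := hκ
  refine ⟨add_nonneg (sq_nonneg _) (sieveForm_nonneg hA x), ?_⟩
  intro G _ _ hG D hD η hη₀ hη₁ hGA
  have h := div_card_mul_diam_le_sq_add_sieveForm hA hG hGA hη₀.le hη₁ hx m
  rw [Fintype.card_fin, hD] at h
  exact h
end

section
/- Let G be a connected simple graph on the vertex set {1,…,n} (n ≥ 2) with edge set E and diameter D. Then for every vertex m and every x ∈ ℝⁿ with ‖x‖₂ = 1, one has x_m² + Σ_{{i,j}∈E} (x_i − x_j)² ≥ 1/(n(D+1)). -/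
/-!
Let `v` maximize `x_v²`, so that `n x_v² ≥ 1`. Along a shortest path `m = w₀, …, w_d = v`
(`d ≤ D`) we have `x_v = x_m + Σ_k (x_{w_{k+1}} - x_{w_k})`, and Cauchy–Schwarz over these `d + 1`
terms gives `x_v² ≤ (d + 1) (x_m² + Σ_k (x_{w_{k+1}} - x_{w_k})²)`. A path traverses each edge at
most once, so the last sum is at most the sum over all edges.
-/

open Finset

namespace SimpleGraph.Walk

variable {V : Type*} {G : SimpleGraph V} {u v : V}

theorem sub_eq_sum_darts {A : Type*} [AddCommGroup A] (p : G.Walk u v) (x : V → A) :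
    x v - x u = (p.darts.map fun d => x d.snd - x d.fst).sum := by
  induction p with
  | nil => simp
  | cons h q ih => simp [← ih]

theorem sq_le_length_add_one_mul_sum_darts (p : G.Walk u v) (x : V → ℝ) :
    x v ^ 2 ≤ (p.length + 1) * (x u ^ 2 + (p.darts.map fun d => (x d.snd - x d.fst) ^ 2).sum) := by
  simpa [← sub_eq_sum_darts, add_comm, Function.comp_def] using
    List.sq_sum_le_length_mul_sum_sq (x u :: p.darts.map fun d => x d.snd - x d.fst)

theorem IsPath.nodup_darts_append_darts_reverse {p : G.Walk u v} (hp : p.IsPath) :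
    (p.darts ++ p.reverse.darts).Nodup := by
  refine List.nodup_append.2 ⟨darts_nodup_of_support_nodup hp.support_nodup,
    darts_nodup_of_support_nodup hp.reverse.support_nodup, ?_⟩
  rintro d hd _ hd' rfl
  obtain ⟨d', hd'', rfl⟩ : ∃ d' ∈ p.darts, d'.symm = d := by simpa [darts_reverse] using hd'
  exact d'.symm_ne
    (List.inj_on_of_nodup_map hp.isTrail.edges_nodup hd hd'' (Dart.edge_symm d'))

theorem IsPath.sum_darts_le [Fintype V] [DecidableRel G.Adj] {M : Type*} [AddCommMonoid M]
    [PartialOrder M] [IsOrderedAddMonoid M] {p : G.Walk u v} (hp : p.IsPath)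
    (F : V → V → M) (hF : ∀ i j, 0 ≤ F i j) :
    (p.darts.map fun d => F d.fst d.snd + F d.snd d.fst).sum
      ≤ ∑ i, ∑ j, if G.Adj i j then F i j else 0 := by
  classical
  set F' : V × V → M := fun q => if G.Adj q.1 q.2 then F q.1 q.2 else 0
  set L := (p.darts ++ p.reverse.darts).map Dart.toProd
  have hL : (p.darts.map fun d => F d.fst d.snd + F d.snd d.fst).sum = (L.map F').sum := by
    simp [L, F', darts_reverse, List.sum_map_add, Function.comp_def, Dart.adj, G.adj_symm]
  calc (p.darts.map fun d => F d.fst d.snd + F d.snd d.fst).sum = (L.map F').sum := hL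
    _ = ∑ q ∈ L.toFinset, F' q :=
      (List.sum_toFinset F' (hp.nodup_darts_append_darts_reverse.map Dart.toProd_injective)).symm
    _ ≤ ∑ q, F' q := sum_le_sum_of_subset_of_nonneg (subset_univ _)
          fun q _ _ => by unfold F'; split_ifs <;> simp [hF]
    _ = ∑ i, ∑ j, if G.Adj i j then F i j else 0 := Fintype.sum_prod_type F'

theorem IsPath.sq_le_length_add_one_mul [Fintype V] [DecidableRel G.Adj] {p : G.Walk u v}
    (hp : p.IsPath) (x : V → ℝ) :
    x v ^ 2 ≤ (p.length + 1) *
      (x u ^ 2 + 1 / 2 * ∑ i, ∑ j, if G.Adj i j then (x i - x j) ^ 2 else 0) := by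
  have hdarts := hp.sum_darts_le (fun i j => (x i - x j) ^ 2) fun _ _ => sq_nonneg _
  have hsymm : ∀ d : G.Dart, (x d.fst - x d.snd) ^ 2 + (x d.snd - x d.fst) ^ 2
      = 2 * (x d.snd - x d.fst) ^ 2 := fun d => by ring
  simp only [hsymm, List.sum_map_mul_left] at hdarts
  calc x v ^ 2 ≤ (p.length + 1) * (x u ^ 2 + (p.darts.map fun d => (x d.snd - x d.fst) ^ 2).sum) :=
        p.sq_le_length_add_one_mul_sum_darts x
    _ ≤ _ := by gcongr; linarith

end SimpleGraph.Walk

theorem stmt5_general (n : ℕ) (G : SimpleGraph (Fin n)) [DecidableRel G.Adj]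
    (hconn : G.Connected) (D : ℕ) (hD : G.diam = D) :
    ∀ (m : Fin n) (x : Fin n → ℝ), ∑ i, (x i) ^ 2 = 1 →
      1 / (n * (D + 1) : ℝ)
        ≤ (x m) ^ 2 + (1 / 2) * ∑ i, ∑ j, if G.Adj i j then (x i - x j) ^ 2 else 0 := by
  intro m x hx
  obtain ⟨v, -, hv⟩ := exists_max_image univ (fun i => x i ^ 2) ⟨m, mem_univ m⟩
  have hxv : 1 ≤ n * x v ^ 2 := by
    simpa [hx] using sum_le_card_nsmul univ (fun i => x i ^ 2) _ fun i _ => hv i (mem_univ i)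
  obtain ⟨p, hp, hpd⟩ := hconn.exists_path_of_dist m v
  have hpD : (p.length : ℝ) ≤ D := by
    have : Nonempty (Fin n) := ⟨m⟩
    exact_mod_cast hpd ▸ hD ▸ G.dist_le_diam (G.connected_iff_ediam_ne_top.mp hconn)
  rw [div_le_iff₀ (by have := m.pos; positivity)]
  calc (1 : ℝ) ≤ n * x v ^ 2 := hxv
    _ ≤ n * ((D + 1) * _) := by gcongr; exact (hp.sq_le_length_add_one_mul x).trans (by gcongr)
    _ = _ := by ring

/-- For a connected simple graph `G` on `n ≥ 2` vertices with
diameter `D`, every vertex `m` and every unit vector `x ∈ ℝⁿ` satisfy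
`x_m² + Σ_{{i,j} ∈ E} (x_i - x_j)² ≥ 1/(n(D+1))`.  (Each unordered edge is
counted once; here the sum over unordered edges is written as half the sum
over ordered adjacent pairs.) -/
theorem stmt5 (n : ℕ) (hn : 2 ≤ n) (G : SimpleGraph (Fin n)) [DecidableRel G.Adj]
    (hconn : G.Connected) (D : ℕ) (hD : G.diam = D) :
    ∀ (m : Fin n) (x : Fin n → ℝ), ∑ i, (x i) ^ 2 = 1 →
      1 / (n * (D + 1) : ℝ)
        ≤ (x m) ^ 2 + (1 / 2) * ∑ i, ∑ j, if G.Adj i j then (x i - x j) ^ 2 else 0 :=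
  stmt5_general n G hconn D hD
end

section
/- Let q ∈ (0,1] and ε ∈ (0,1), and let a ≤ b be integers with 2 ≤ a and a ≤ b − (2/q) b^{1−ε} ln b. Then Φ_q(a,b) ≤ 1/b². -/
/-!
Since `1 - x ≤ exp (-x)` and every factor is nonnegative, `Φ_q(a,b) ≤ exp (-∑ q / t^(1-ε))`.
Each of the `b - a` terms of the sum is at least `q / b^(1-ε)`, and the gap hypothesis says
exactly that `(b - a) q / b^(1-ε) ≥ 2 ln b`, so the product is at most `exp (-2 ln b) = 1/b²`.
-/

open Finset Real

theorem prod_one_sub_le_exp_neg_sum {ι : Type*} (s : Finset ι) {f : ι → ℝ}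
    (hf : ∀ i ∈ s, f i ≤ 1) : ∏ i ∈ s, (1 - f i) ≤ exp (-∑ i ∈ s, f i) := by
  rw [← sum_neg_distrib, exp_sum]
  exact prod_le_prod (fun i hi ↦ sub_nonneg.2 (hf i hi)) fun i _ ↦ one_sub_le_exp_neg (f i)

theorem div_rpow_le_one {q x s : ℝ} (hq : q ≤ 1) (hx : 1 ≤ x) (hs : 0 ≤ s) :
    q / x ^ s ≤ 1 :=
  (div_le_one (by positivity)).2 (hq.trans (one_le_rpow hx hs))

theorem sub_mul_div_rpow_le_sum_Ico {q s : ℝ} (hq : 0 ≤ q) (hs : 0 ≤ s) {a b : ℕ}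
    (ha : 0 < a) :
    ((b : ℝ) - a) * (q / (b : ℝ) ^ s) ≤ ∑ t ∈ Ico a b, q / (t : ℝ) ^ s := by
  have hterm : ∀ t ∈ Ico a b, q / (b : ℝ) ^ s ≤ q / (t : ℝ) ^ s := fun t ht ↦ by
    have ht0 : (0 : ℝ) < t := by exact_mod_cast ha.trans_le (mem_Ico.1 ht).1
    have htb : (t : ℝ) ≤ b := by exact_mod_cast (mem_Ico.1 ht).2.le
    exact div_le_div_of_nonneg_left hq (by positivity) (rpow_le_rpow ht0.le htb hs)
  calc ((b : ℝ) - a) * (q / (b : ℝ) ^ s)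
      ≤ ((b - a : ℕ) : ℝ) * (q / (b : ℝ) ^ s) := by
        gcongr; exact sub_le_iff_le_add.2 (by exact_mod_cast le_tsub_add)
    _ = ∑ _t ∈ Ico a b, q / (b : ℝ) ^ s := by rw [sum_const, Nat.card_Ico, nsmul_eq_mul]
    _ ≤ ∑ t ∈ Ico a b, q / (t : ℝ) ^ s := sum_le_sum hterm

theorem exp_neg_two_mul_log {x : ℝ} (hx : 0 < x) : exp (-(2 * log x)) = 1 / x ^ 2 := by
  rw [exp_neg, ← Nat.cast_ofNat, exp_nat_mul, exp_log hx, one_div]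

theorem stmt9_general (q ε : ℝ) (hq0 : 0 < q) (hq1 : q ≤ 1) (hε1 : ε < 1)
    (a b : ℕ) (ha : 2 ≤ a)
    (hagap : (a : ℝ) ≤ (b : ℝ) - (2 / q) * (b : ℝ) ^ (1 - ε) * Real.log b) :
    ∏ t ∈ Finset.Ico a b, (1 - q / (t : ℝ) ^ (1 - ε)) ≤ 1 / (b : ℝ) ^ 2 := by
  have hs : 0 ≤ 1 - ε := by linarith
  have hb : (0 : ℝ) < b := by
    rcases Nat.eq_zero_or_pos b with rfl | hb
    · simp only [CharP.cast_eq_zero, log_zero, mul_zero, sub_self, Nat.cast_nonpos] at hagap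
      omega
    · exact_mod_cast hb
  have hlog_le_sum : 2 * log b ≤ ∑ t ∈ Ico a b, q / (t : ℝ) ^ (1 - ε) :=
    calc 2 * log b = (2 / q) * (b : ℝ) ^ (1 - ε) * log b * (q / (b : ℝ) ^ (1 - ε)) := by
          field_simp
      _ ≤ ((b : ℝ) - a) * (q / (b : ℝ) ^ (1 - ε)) := by gcongr; linarith
      _ ≤ _ := sub_mul_div_rpow_le_sum_Ico hq0.le hs (by omega)
  calc ∏ t ∈ Ico a b, (1 - q / (t : ℝ) ^ (1 - ε))
      ≤ exp (-∑ t ∈ Ico a b, q / (t : ℝ) ^ (1 - ε)) :=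
        prod_one_sub_le_exp_neg_sum _ fun t ht ↦
          div_rpow_le_one hq1 (Nat.one_le_cast.2 (one_le_two.trans (ha.trans (mem_Ico.1 ht).1))) hs
    _ ≤ exp (-(2 * log b)) := exp_le_exp.2 (neg_le_neg hlog_le_sum)
    _ = 1 / (b : ℝ) ^ 2 := exp_neg_two_mul_log hb

/-- For `q ∈ (0,1]`, `ε ∈ (0,1)` and integers `2 ≤ a ≤ b` with
`a ≤ b - (2/q) b^(1-ε) ln b`, one has `Φ_q(a,b) ≤ 1/b²`. -/
theorem stmt9 (q ε : ℝ) (hq0 : 0 < q) (hq1 : q ≤ 1) (hε0 : 0 < ε) (hε1 : ε < 1)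
    (a b : ℕ) (ha : 2 ≤ a) (hab : a ≤ b)
    (hagap : (a : ℝ) ≤ (b : ℝ) - (2 / q) * (b : ℝ) ^ (1 - ε) * Real.log b) :
    ∏ t ∈ Finset.Ico a b, (1 - q / (t : ℝ) ^ (1 - ε)) ≤ 1 / (b : ℝ) ^ 2 :=
  stmt9_general q ε hq0 hq1 hε1 a b ha hagap
end

section
/- Let q ∈ (0,1] and ε ∈ (0,1), and let b be a real number with b ≥ [ (12/(qε)) ln(4/(qε)) ]^{1/ε}. Then b − (2/q) b^{1−ε} ln b ≥ b/2. -/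
/-!
With `A = 4/(qε) ≥ 4`, the hypothesis says `b^ε ≥ 3 A log A`. Since `t ↦ t - A log t` is increasing
for `t ≥ A` and nonnegative at `t = 3 A log A`, this gives `A log (b^ε) ≤ b^ε`, i.e.
`(4/q) log b ≤ b^ε`; multiplying by `b^(1-ε)/2` yields `(2/q) b^(1-ε) log b ≤ b/2`.
-/

open Real

lemma mul_log_le_of_mul_log_le {A s t : ℝ} (hA : 0 < A) (hAs : A ≤ s) (hst : s ≤ t)
    (hs : A * log s ≤ s) : A * log t ≤ t := by
  have hs0 : 0 < s := hA.trans_le hAs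
  have hlog : log t - log s ≤ (t - s) / s := by
    rw [← log_div (hs0.trans_le hst).ne' hs0.ne']
    calc log (t / s) ≤ t / s - 1 := log_le_sub_one_of_pos (div_pos (hs0.trans_le hst) hs0)
      _ = (t - s) / s := by field_simp
  have hslope : A * ((t - s) / s) ≤ t - s := by
    rw [mul_div_assoc', div_le_iff₀ hs0, mul_comm (t - s)]
    exact mul_le_mul_of_nonneg_right hAs (sub_nonneg.2 hst)
  nlinarith

lemma mul_log_three_mul_mul_log_le {A : ℝ} (hA : exp 1 ≤ A) :
    A * log (3 * A * log A) ≤ 3 * A * log A := by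
  have hA0 : 0 < A := (exp_pos 1).trans_le hA
  have hL : 1 ≤ log A := (le_log_iff_exp_le hA0).2 hA
  have hlog3 : log 3 ≤ 2 := by linarith [log_le_sub_one_of_pos (x := 3) (by norm_num)]
  have hlogL : log (log A) ≤ log A - 1 := log_le_sub_one_of_pos (by linarith)
  have hsplit : log (3 * A * log A) = log 3 + log A + log (log A) := by
    rw [log_mul (by positivity) (by linarith), log_mul (by norm_num) hA0.ne']
  rw [hsplit]
  nlinarith

lemma mul_log_le_self_of_three_mul_mul_log_le {A t : ℝ} (hA : exp 1 ≤ A)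
    (ht : 3 * A * log A ≤ t) : A * log t ≤ t := by
  have hA0 : 0 < A := (exp_pos 1).trans_le hA
  have hL : 1 ≤ log A := (le_log_iff_exp_le hA0).2 hA
  refine mul_log_le_of_mul_log_le hA0 ?_ ht (mul_log_three_mul_mul_log_le hA)
  nlinarith

lemma half_le_sub_mul_rpow_mul_log {b c ε : ℝ} (hb : 0 < b) (h : 2 * c * log b ≤ b ^ ε) :
    b / 2 ≤ b - c * b ^ (1 - ε) * log b := by
  have hsplit : b = b ^ ε * b ^ (1 - ε) := by rw [← rpow_add hb, add_sub_cancel, rpow_one]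
  have := mul_le_mul_of_nonneg_right h (rpow_nonneg hb.le (1 - ε))
  nlinarith

/-- For `q ∈ (0,1]`, `ε ∈ (0,1)` and a real
`b ≥ [(12/(qε)) ln(4/(qε))]^(1/ε)`, one has `b - (2/q) b^(1-ε) ln b ≥ b/2`. -/
theorem stmt10 (q ε b : ℝ) (hq0 : 0 < q) (hq1 : q ≤ 1) (hε0 : 0 < ε) (hε1 : ε < 1)
    (hb : (12 / (q * ε) * Real.log (4 / (q * ε))) ^ (1 / ε) ≤ b) :
    b / 2 ≤ b - (2 / q) * b ^ (1 - ε) * Real.log b := by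
  set A := 4 / (q * ε)
  have hA : exp 1 ≤ A := by
    have hqε : q * ε ≤ 1 := by nlinarith
    calc exp 1 ≤ 4 := by linarith [exp_one_lt_d9]
      _ ≤ A := by rw [le_div_iff₀ (by positivity)]; linarith
  have hA0 : 0 < A := (exp_pos 1).trans_le hA
  have hM : 0 < 3 * A * log A := by
    have hL : 1 ≤ log A := (le_log_iff_exp_le hA0).2 hA
    nlinarith
  rw [show 12 / (q * ε) * log A = 3 * A * log A by ring, one_div] at hb
  have hb0 : 0 < b := (rpow_pos_of_pos hM _).trans_le hb
  have hbε : 3 * A * log A ≤ b ^ ε := (rpow_inv_le_iff_of_pos hM.le hb0.le hε0).1 hb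
  have hkey := mul_log_le_self_of_three_mul_mul_log_le hA hbε
  rw [log_rpow hb0, ← mul_assoc, show A * ε = 2 * (2 / q) by simp only [A]; field_simp; ring] at hkey
  exact half_le_sub_mul_rpow_mul_log hb0 hkey
end

section
/- Let q ∈ (0,1], ε ∈ (0,1), d ≥ 0, and let a(1), a(2), a(3), … be a sequence of real numbers with a(1) ≥ 0 satisfying a(k+1) ≤ (1 − q/(k+1)^{1−ε}) a(k) + d/k^{2−2ε} for every integer k ≥ 1. Then for every integer k ≥ [ (12/(qε)) ln(4/(qε)) ]^{1/ε}, one has a(k) ≤ (9d/q) (ln k)/k^{1−ε} + a(1) exp( −q(k^ε − 2)/ε ). -/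
open Real Finset

/-!
Write `c i = 1 - q / (i + 1) ^ (1 - ε)`. If `s` is a supersolution of the recursion from index
`m` on, i.e. `c k * s k + d / k ^ (2 - 2ε) ≤ s (k + 1)` for `k ≥ m`, then
`a k - s k ≤ (a m - s m) * ∏_{m ≤ i < k} c i`. Concavity of `t ↦ t ^ ε` gives both the product
bound `∏_{m ≤ i < k} c i ≤ exp (-(q/ε) ((k + 1) ^ ε - (m + 1) ^ ε))` and two supersolutions:
`(d/ε) (k - 1) ^ ε` for all `k ≥ 1`, and `(7d/q) ln k / k ^ (1 - ε)` once `k ^ ε ≥ 4/q`, i.e. from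
`N ≈ (4/q) ^ (1/ε)` on. Chaining them through `N` yields
`a k ≤ (7d/q) ln k / k ^ (1 - ε) + (4d/(qε)) exp ((8 - q k ^ ε)/ε) + a 1 exp (-q (k ^ ε - 2)/ε)`,
and beyond the threshold of the theorem the middle term is at most `(2d/q) ln k / k ^ (1 - ε)`.
-/

theorem rpow_le_rpow_add_mul_sub_div {p x y : ℝ} (hp0 : 0 ≤ p) (hp1 : p ≤ 1) (hx : 0 < x)
    (hy : 0 ≤ y) : y ^ p ≤ x ^ p + p * (y - x) / x ^ (1 - p) := by
  have hbern : (1 + (y / x - 1)) ^ p ≤ 1 + p * (y / x - 1) :=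
    rpow_one_add_le_one_add_mul_self (by linarith [div_nonneg hy hx.le]) hp0 hp1
  rw [add_sub_cancel] at hbern
  have hsplit : y ^ p = x ^ p * (y / x) ^ p := by
    rw [← mul_rpow hx.le (by positivity), mul_div_cancel₀ y hx.ne']
  have hxp : x ^ p / x = 1 / x ^ (1 - p) := by
    rw [← rpow_sub_one hx.ne', show p - 1 = -(1 - p) by ring, rpow_neg hx.le, one_div]
  calc y ^ p ≤ x ^ p * (1 + p * (y / x - 1)) := by rw [hsplit]; gcongr
    _ = x ^ p + p * (y - x) * (x ^ p / x) := by field_simp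
    _ = x ^ p + p * (y - x) / x ^ (1 - p) := by rw [hxp]; ring

theorem add_one_rpow_sub_le_mul_sum {ε : ℝ} (hε0 : 0 ≤ ε) (hε1 : ε ≤ 1) {m k : ℕ}
    (hmk : m ≤ k) :
    ((k : ℝ) + 1) ^ ε - ((m : ℝ) + 1) ^ ε ≤ ε * ∑ i ∈ Ico m k, 1 / ((i : ℝ) + 1) ^ (1 - ε) := by
  rw [← sum_Ico_sub (fun i : ℕ => ((i : ℝ) + 1) ^ ε) hmk, mul_sum]
  refine sum_le_sum fun i _ => ?_
  have := rpow_le_rpow_add_mul_sub_div hε0 hε1 (x := (i : ℝ) + 1) (y := i + 1 + 1)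
    (by positivity) (by positivity)
  have hstep : ε * ((i : ℝ) + 1 + 1 - (i + 1)) / ((i : ℝ) + 1) ^ (1 - ε)
      = ε * (1 / ((i : ℝ) + 1) ^ (1 - ε)) := by ring
  push_cast
  linarith

theorem prod_le_exp_neg_sum {ι : Type*} (s : Finset ι) {c x : ι → ℝ}
    (hc : ∀ i ∈ s, 0 ≤ c i) (hcx : ∀ i ∈ s, c i ≤ 1 - x i) :
    ∏ i ∈ s, c i ≤ exp (-∑ i ∈ s, x i) := by
  rw [← sum_neg_distrib, exp_sum]
  exact prod_le_prod hc fun i hi => (hcx i hi).trans (by linarith [add_one_le_exp (-x i)])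

theorem sub_le_mul_prod_of_le_supersolution {a s b c : ℕ → ℝ} {m : ℕ}
    (hc : ∀ k, m ≤ k → 0 ≤ c k) (ha : ∀ k, m ≤ k → a (k + 1) ≤ c k * a k + b k)
    (hs : ∀ k, m ≤ k → c k * s k + b k ≤ s (k + 1)) :
    ∀ k, m ≤ k → a k - s k ≤ (a m - s m) * ∏ i ∈ Ico m k, c i := by
  intro k hk
  induction k, hk using Nat.le_induction with
  | base => simp
  | succ k hk ih =>
    rw [prod_Ico_succ_top hk]
    calc a (k + 1) - s (k + 1) ≤ c k * (a k - s k) := by linarith [ha k hk, hs k hk]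
      _ ≤ c k * ((a m - s m) * ∏ i ∈ Ico m k, c i) := mul_le_mul_of_nonneg_left ih (hc k hk)
      _ = (a m - s m) * ((∏ i ∈ Ico m k, c i) * c k) := by ring

noncomputable def decayFactor (q ε : ℝ) (i : ℕ) : ℝ := 1 - q / ((i : ℝ) + 1) ^ (1 - ε)

theorem decayFactor_nonneg {q ε : ℝ} (hq : q ≤ 1) (hε : ε ≤ 1) (i : ℕ) :
    0 ≤ decayFactor q ε i := by
  have hpow : 1 ≤ ((i : ℝ) + 1) ^ (1 - ε) := one_le_rpow (by simp) (by linarith)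
  have : q / ((i : ℝ) + 1) ^ (1 - ε) ≤ 1 := (div_le_one (by positivity)).2 (hq.trans hpow)
  unfold decayFactor
  linarith

theorem prod_decayFactor_le_exp {q ε : ℝ} (hq0 : 0 ≤ q) (hq1 : q ≤ 1) (hε0 : 0 < ε)
    (hε1 : ε ≤ 1) {m k : ℕ} (hmk : m ≤ k) :
    ∏ i ∈ Ico m k, decayFactor q ε i
      ≤ exp (-(q / ε * (((k : ℝ) + 1) ^ ε - ((m : ℝ) + 1) ^ ε))) := by
  refine (prod_le_exp_neg_sum _ (x := fun i : ℕ => q / ((i : ℝ) + 1) ^ (1 - ε))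
    (fun i _ => decayFactor_nonneg hq1 hε1 i) (fun i _ => le_rfl)).trans ?_
  rw [exp_le_exp, neg_le_neg_iff]
  calc q / ε * (((k : ℝ) + 1) ^ ε - ((m : ℝ) + 1) ^ ε)
      ≤ q / ε * (ε * ∑ i ∈ Ico m k, 1 / ((i : ℝ) + 1) ^ (1 - ε)) := by
        gcongr
        exact add_one_rpow_sub_le_mul_sum hε0.le hε1 hmk
    _ = ∑ i ∈ Ico m k, q / ((i : ℝ) + 1) ^ (1 - ε) := by
        rw [mul_sum, mul_sum]
        refine sum_congr rfl fun i _ => ?_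
        field_simp

def DecayRecursion (q ε d : ℝ) (a : ℕ → ℝ) : Prop :=
  ∀ k : ℕ, 1 ≤ k → a (k + 1) ≤ decayFactor q ε k * a k + d / (k : ℝ) ^ (2 - 2 * ε)

theorem supersolution_rpow {q ε d x : ℝ} (hq : 0 ≤ q) (hε0 : 0 < ε) (hε1 : ε ≤ 1) (hd : 0 ≤ d)
    (hx : 1 ≤ x) :
    (1 - q / (x + 1) ^ (1 - ε)) * (d / ε * (x - 1) ^ ε) + d / x ^ (2 - 2 * ε)
      ≤ d / ε * x ^ ε := by
  have hs : 0 ≤ d / ε * (x - 1) ^ ε := by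
    have : 0 ≤ x - 1 := by linarith
    positivity
  have hdamp : (1 - q / (x + 1) ^ (1 - ε)) * (d / ε * (x - 1) ^ ε) ≤ d / ε * (x - 1) ^ ε :=
    mul_le_of_le_one_left hs (by linarith [show 0 ≤ q / (x + 1) ^ (1 - ε) by positivity])
  have hforcing : d / x ^ (2 - 2 * ε) ≤ d / x ^ (1 - ε) :=
    div_le_div_of_nonneg_left hd (by positivity) (rpow_le_rpow_of_exponent_le hx (by linarith))
  have htangent : (x - 1) ^ ε ≤ x ^ ε + ε * (x - 1 - x) / x ^ (1 - ε) :=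
    rpow_le_rpow_add_mul_sub_div hε0.le hε1 (by linarith) (by linarith)
  have hgrowth : d / ε * (x - 1) ^ ε + d / x ^ (1 - ε) ≤ d / ε * x ^ ε := by
    have := mul_le_mul_of_nonneg_left htangent (by positivity : 0 ≤ d / ε)
    have hid : d / ε * (ε * (x - 1 - x) / x ^ (1 - ε)) = -(d / x ^ (1 - ε)) := by
      field_simp
      ring
    linarith
  linarith

theorem supersolution_log_div_rpow {q ε d K : ℝ} (hq : 0 < q) (hε0 : 0 ≤ ε) (hε1 : ε ≤ 1)
    (hd : 0 ≤ d) (hK : 2 ≤ K) (hKq : 4 / q ≤ K ^ ε) :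
    (1 - q / (K + 1) ^ (1 - ε)) * (7 * d / q * log K / K ^ (1 - ε)) + d / K ^ (2 - 2 * ε)
      ≤ 7 * d / q * log (K + 1) / (K + 1) ^ (1 - ε) := by
  have hK0 : 0 < K := by linarith
  have hb : 1 ≤ K ^ (1 - ε) := one_le_rpow (by linarith) (by linarith)
  have hKε : 1 ≤ K ^ ε := one_le_rpow (by linarith) hε0
  have hgap : (K + 1) ^ (1 - ε) - K ^ (1 - ε) ≤ 1 / K ^ ε := by
    have htangent := rpow_le_rpow_add_mul_sub_div (p := 1 - ε) (y := K + 1) (by linarith)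
      (by linarith) hK0 (by linarith)
    rw [sub_sub_cancel, add_sub_cancel_left, mul_one] at htangent
    have : (1 - ε) / K ^ ε ≤ 1 / K ^ ε := by gcongr; linarith
    linarith
  have hgap_q : 1 / K ^ ε ≤ q / 4 := by
    rw [div_le_div_iff₀ (by positivity) (by norm_num)]
    rw [div_le_iff₀ hq] at hKq
    linarith
  have hgap_one : 1 / K ^ ε ≤ 1 := (div_le_one (by positivity)).2 hKε
  have hlog : 1 / 2 ≤ log K := by
    have := log_le_log (by norm_num) hK
    linarith [log_two_gt_d9]
  have hlog_mono : log K ≤ log (K + 1) := log_le_log hK0 (by linarith)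
  have hsq : K ^ (2 - 2 * ε) = (K ^ (1 - ε)) ^ 2 := by
    rw [← rpow_mul_natCast hK0.le]
    congr 1
    push_cast
    ring
  set b := K ^ (1 - ε)
  set b₁ := (K + 1) ^ (1 - ε)
  have hb₁ : 0 < b₁ := by positivity
  have hkey : d * b₁ ≤ 7 * d / q * log K * b * (b + q - b₁) := by
    have h1 : 7 * d / q * log K * b * (3 * q / 4) ≤ 7 * d / q * log K * b * (b + q - b₁) := by
      gcongr
      linarith
    have h2 : 7 * d / q * log K * b * (3 * q / 4) = 21 / 4 * d * log K * b := by
      field_simp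
      ring
    nlinarith [mul_nonneg hd (by linarith : (0 : ℝ) ≤ b)]
  rw [hsq]
  calc (1 - q / b₁) * (7 * d / q * log K / b) + d / b ^ 2
      = ((b₁ - q) * (7 * d / q * log K) * b + d * b₁) / (b ^ 2 * b₁) := by
        field_simp
    _ ≤ (7 * d / q * log K * b ^ 2) / (b ^ 2 * b₁) := by
        gcongr
        nlinarith
    _ = 7 * d / q * log K / b₁ := by
        field_simp
    _ ≤ 7 * d / q * log (K + 1) / b₁ := by gcongr

theorem exists_nat_rpow_near {q ε : ℝ} (hq0 : 0 < q) (hq1 : q ≤ 1) (hε0 : 0 < ε) (hε1 : ε ≤ 1) :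
    ∃ N : ℕ, 2 ≤ N ∧ 4 / q ≤ (N : ℝ) ^ ε ∧ ((N : ℝ) - 1) ^ ε ≤ 4 / q
      ∧ ((N : ℝ) + 1) ^ ε ≤ 8 / q := by
  set x := (4 / q) ^ (1 / ε)
  have hx : x ^ ε = 4 / q := by
    rw [← rpow_mul (by positivity), one_div_mul_cancel hε0.ne', rpow_one]
  have h4q : 4 ≤ 4 / q := by rw [le_div_iff₀ hq0]; linarith
  have hx4 : 4 ≤ x :=
    h4q.trans (self_le_rpow_of_one_le (by linarith) (by rw [le_div_iff₀ hε0]; linarith))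
  have hceil := Nat.le_ceil x
  have hceil' := Nat.ceil_lt_add_one (by linarith : 0 ≤ x)
  refine ⟨⌈x⌉₊, ?_, ?_, ?_, ?_⟩
  · exact_mod_cast (by linarith : (2 : ℝ) ≤ ⌈x⌉₊)
  · rw [← hx]
    gcongr
  · rw [← hx]
    exact rpow_le_rpow (by linarith) (by linarith) hε0.le
  · calc ((⌈x⌉₊ : ℝ) + 1) ^ ε ≤ (2 * x) ^ ε := by gcongr; linarith
      _ = 2 ^ ε * x ^ ε := mul_rpow (by norm_num) (by linarith)
      _ ≤ 2 * (4 / q) := by rw [hx]; gcongr; exact rpow_le_self_of_one_le one_le_two hε1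
      _ = 8 / q := by ring

section Recursion

variable {q ε d : ℝ} {a : ℕ → ℝ}

theorem le_rpow_add_mul_prod_decayFactor (hq0 : 0 ≤ q) (hq1 : q ≤ 1) (hε0 : 0 < ε)
    (hε1 : ε ≤ 1) (hd : 0 ≤ d) (hrec : DecayRecursion q ε d a) {n : ℕ} (hn : 1 ≤ n) :
    a n ≤ d / ε * ((n : ℝ) - 1) ^ ε + a 1 * ∏ i ∈ Ico 1 n, decayFactor q ε i := by
  have hcomp := sub_le_mul_prod_of_le_supersolution (c := decayFactor q ε)
    (s := fun n : ℕ => d / ε * ((n : ℝ) - 1) ^ ε) (fun i _ => decayFactor_nonneg hq1 hε1 i) hrec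
    (fun i hi => by
      have := supersolution_rpow hq0 hε0 hε1 hd (x := i) (by exact_mod_cast hi)
      push_cast
      rwa [add_sub_cancel_right])
    n hn
  simp only [Nat.cast_one, sub_self, zero_rpow hε0.ne', mul_zero, sub_zero] at hcomp
  linarith

theorem le_log_div_rpow_add_mul_prod_decayFactor (hq0 : 0 < q) (hq1 : q ≤ 1) (hε0 : 0 < ε)
    (hε1 : ε ≤ 1) (hd : 0 ≤ d) (hrec : DecayRecursion q ε d a)
    {N : ℕ} (hN : 2 ≤ N) (hNq : 4 / q ≤ (N : ℝ) ^ ε) {k : ℕ} (hk : N ≤ k) :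
    a k ≤ 7 * d / q * log k / (k : ℝ) ^ (1 - ε)
      + d / ε * ((N : ℝ) - 1) ^ ε * ∏ i ∈ Ico N k, decayFactor q ε i
      + a 1 * ∏ i ∈ Ico 1 k, decayFactor q ε i := by
  set s : ℕ → ℝ := fun n => 7 * d / q * log n / (n : ℝ) ^ (1 - ε)
  have hcomp := sub_le_mul_prod_of_le_supersolution (c := decayFactor q ε) (s := s)
    (fun i _ => decayFactor_nonneg hq1 hε1 i) (fun i hi => hrec i (by omega))
    (fun i hi => by
      have hi' : (N : ℝ) ≤ i := by exact_mod_cast hi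
      have := supersolution_log_div_rpow hq0 hε0.le hε1 hd (K := i)
        (by exact_mod_cast hN.trans hi) (hNq.trans (by gcongr))
      simp only [s]
      push_cast
      exact this)
    k hk
  have hsN : 0 ≤ s N := by
    have : 0 ≤ log (N : ℝ) := log_nonneg (by exact_mod_cast (by omega : 1 ≤ N))
    positivity
  have hP : 0 ≤ ∏ i ∈ Ico N k, decayFactor q ε i :=
    prod_nonneg fun i _ => decayFactor_nonneg hq1 hε1 i
  have hburn := le_rpow_add_mul_prod_decayFactor hq0.le hq1 hε0 hε1 hd hrec (n := N) (by omega)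
  calc a k ≤ s k + a N * ∏ i ∈ Ico N k, decayFactor q ε i := by nlinarith
    _ ≤ s k + (d / ε * ((N : ℝ) - 1) ^ ε + a 1 * ∏ i ∈ Ico 1 N, decayFactor q ε i)
          * ∏ i ∈ Ico N k, decayFactor q ε i := by gcongr
    _ = _ := by
        rw [← prod_Ico_consecutive _ (by omega : 1 ≤ N) hk]
        ring

theorem le_log_div_rpow_add_exp (hq0 : 0 < q) (hq1 : q ≤ 1) (hε0 : 0 < ε) (hε1 : ε ≤ 1)
    (hd : 0 ≤ d) (ha1 : 0 ≤ a 1) (hrec : DecayRecursion q ε d a) {k : ℕ} (hk : 4 / q < (k : ℝ) ^ ε) :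
    a k ≤ 7 * d / q * log k / (k : ℝ) ^ (1 - ε)
      + 4 * d / (q * ε) * exp ((8 - q * (k : ℝ) ^ ε) / ε)
      + a 1 * exp (-(q * ((k : ℝ) ^ ε - 2) / ε)) := by
  obtain ⟨N, hN2, hNq, hN1, hN8⟩ := exists_nat_rpow_near hq0 hq1 hε0 hε1
  have hNk : N ≤ k := by
    have := (rpow_lt_rpow_iff (by linarith [(show (2 : ℝ) ≤ N by exact_mod_cast hN2)])
      (Nat.cast_nonneg k) hε0).1 (hN1.trans_lt hk)
    exact Nat.lt_add_one_iff.1 (by exact_mod_cast (by linarith : (N : ℝ) < k + 1))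
  have hk1 : 1 ≤ k := by omega
  have hkk : (k : ℝ) ^ ε ≤ ((k : ℝ) + 1) ^ ε := by gcongr; linarith
  have hprodN : ∏ i ∈ Ico N k, decayFactor q ε i ≤ exp ((8 - q * (k : ℝ) ^ ε) / ε) := by
    refine (prod_decayFactor_le_exp hq0.le hq1 hε0 hε1 hNk).trans (exp_le_exp.2 ?_)
    rw [le_div_iff₀ hε0]
    have := mul_le_mul_of_nonneg_left hN8 hq0.le
    field_simp at this ⊢
    nlinarith
  have hprod1 : ∏ i ∈ Ico 1 k, decayFactor q ε i ≤ exp (-(q * ((k : ℝ) ^ ε - 2) / ε)) := by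
    refine (prod_decayFactor_le_exp hq0.le hq1 hε0 hε1 hk1).trans (exp_le_exp.2 ?_)
    have h2 : ((1 : ℕ) + 1 : ℝ) ^ ε ≤ 2 := by norm_num; exact rpow_le_self_of_one_le one_le_two hε1
    rw [neg_le_neg_iff, mul_div_right_comm]
    gcongr
  have hPN : 0 ≤ ∏ i ∈ Ico N k, decayFactor q ε i :=
    prod_nonneg fun i _ => decayFactor_nonneg hq1 hε1 i
  calc a k ≤ _ := le_log_div_rpow_add_mul_prod_decayFactor hq0 hq1 hε0 hε1 hd hrec hN2 hNq hNk
    _ ≤ 7 * d / q * log k / (k : ℝ) ^ (1 - ε)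
        + d / ε * (4 / q) * exp ((8 - q * (k : ℝ) ^ ε) / ε)
        + a 1 * exp (-(q * ((k : ℝ) ^ ε - 2) / ε)) := by
      gcongr
    _ = _ := by ring

end Recursion

theorem add_log_le_mul_of_le {c q B u : ℝ} (hB : 0 < B) (hqB : 1 ≤ q * B)
    (hc : c + log B ≤ q * B) (hu : B ≤ u) : c + log u ≤ q * u := by
  have hu0 : 0 < u := hB.trans_le hu
  have hlog : log u - log B ≤ u / B - 1 := by
    rw [← log_div hu0.ne' hB.ne']
    exact log_le_sub_one_of_pos (by positivity)
  have hlin : u / B - 1 ≤ q * (u - B) := by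
    rw [div_sub_one hB.ne', div_le_iff₀ hB]
    nlinarith
  linarith

theorem one_le_log_four_div {q ε : ℝ} (hq0 : 0 < q) (hq1 : q ≤ 1) (hε0 : 0 < ε) (hε1 : ε ≤ 1) :
    1 ≤ log (4 / (q * ε)) := by
  have hqε : 0 < q * ε := mul_pos hq0 hε0
  rw [le_log_iff_exp_le (by positivity), le_div_iff₀ hqε]
  nlinarith [exp_one_lt_d9]

theorem twelve_le_threshold {q ε : ℝ} (hq0 : 0 < q) (hq1 : q ≤ 1) (hε0 : 0 < ε) (hε1 : ε ≤ 1) :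
    12 ≤ 12 / (q * ε) * log (4 / (q * ε)) := by
  have hL := one_le_log_four_div hq0 hq1 hε0 hε1
  have : 12 ≤ 12 / (q * ε) := by
    rw [le_div_iff₀ (mul_pos hq0 hε0)]
    nlinarith
  nlinarith

theorem nine_add_log_le_mul_of_threshold_le {q ε u : ℝ} (hq0 : 0 < q) (hq1 : q ≤ 1)
    (hε0 : 0 < ε) (hε1 : ε ≤ 1) (hu : 12 / (q * ε) * log (4 / (q * ε)) ≤ u) :
    9 + log u ≤ q * u := by
  set L := log (4 / (q * ε))
  have hL := one_le_log_four_div hq0 hq1 hε0 hε1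
  have hqB : q * (12 / (q * ε) * L) = 12 * L / ε := by field_simp
  have hqB' : 12 * L ≤ 12 * L / ε := by rw [le_div_iff₀ hε0]; nlinarith
  refine add_log_le_mul_of_le (by linarith [twelve_le_threshold hq0 hq1 hε0 hε1]) (by linarith)
    ?_ hu
  -- `B = 3L · e^L`, so `log B = log (3L) + L ≤ 4L - 1`
  have hlogB : log (12 / (q * ε) * L) = log (3 * L) + L := by
    rw [show 12 / (q * ε) * L = 3 * L * (4 / (q * ε)) by ring,
      log_mul (by positivity) (by positivity)]
  have h3L := log_le_sub_one_of_pos (show 0 < 3 * L by positivity)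
  linarith

theorem two_div_mul_exp_le_log_div_rpow {q ε k : ℝ} (hε0 : 0 < ε) (hε1 : ε ≤ 1) (hk : 0 < k)
    (hu : 3 ≤ k ^ ε) (h : 9 + log (k ^ ε) ≤ q * k ^ ε) :
    2 / ε * exp ((8 - q * k ^ ε) / ε) ≤ log k / k ^ (1 - ε) := by
  have hlogu : log (k ^ ε) = ε * log k := log_rpow hk ε
  have hlogu1 : 1 ≤ log (k ^ ε) := by
    rw [le_log_iff_exp_le (by linarith)]
    linarith [exp_one_lt_d9]
  have hlogk : 1 / ε ≤ log k := by rw [div_le_iff₀ hε0]; linarith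
  have hlogk0 : 0 ≤ log k := (one_div_pos.2 hε0).le.trans hlogk
  have hden : 1 / k ^ (1 - ε) = exp (-((1 - ε) * log k)) := by
    rw [rpow_def_of_pos hk, exp_neg, one_div, mul_comm]
  have hexponent : log 2 + (8 - q * k ^ ε) / ε ≤ -((1 - ε) * log k) := by
    have hlog2 : log 2 ≤ 1 := by linarith [log_le_sub_one_of_pos (two_pos : (0 : ℝ) < 2)]
    have : ε * log 2 + 8 - q * k ^ ε ≤ -((1 - ε) * (ε * log k)) := by
      nlinarith [mul_le_mul hε1 hlog2 (log_nonneg one_le_two) zero_le_one]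
    calc log 2 + (8 - q * k ^ ε) / ε = (ε * log 2 + 8 - q * k ^ ε) / ε := by
          field_simp
          ring
      _ ≤ -((1 - ε) * (ε * log k)) / ε := by gcongr
      _ = -((1 - ε) * log k) := by field_simp
  have hexp : 2 * exp ((8 - q * k ^ ε) / ε) ≤ 1 / k ^ (1 - ε) := by
    rw [hden, ← exp_log (two_pos : (0 : ℝ) < 2), ← exp_add]
    exact exp_le_exp.2 hexponent
  calc 2 / ε * exp ((8 - q * k ^ ε) / ε) = 1 / ε * (2 * exp ((8 - q * k ^ ε) / ε)) := by ring
    _ ≤ log k * (1 / k ^ (1 - ε)) := by gcongr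
    _ = log k / k ^ (1 - ε) := by ring

/-- decay of a sequence satisfying
`a(k+1) ≤ (1 - q/(k+1)^(1-ε)) a(k) + d/k^(2-2ε)`. -/
theorem stmt11 (q ε d : ℝ) (hq0 : 0 < q) (hq1 : q ≤ 1) (hε0 : 0 < ε) (hε1 : ε < 1)
    (hd : 0 ≤ d) (a : ℕ → ℝ) (ha1 : 0 ≤ a 1)
    (hrec : ∀ k : ℕ, 1 ≤ k →
      a (k + 1) ≤ (1 - q / ((k : ℝ) + 1) ^ (1 - ε)) * a k + d / (k : ℝ) ^ (2 - 2 * ε)) :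
    ∀ k : ℕ, (12 / (q * ε) * Real.log (4 / (q * ε))) ^ (1 / ε) ≤ (k : ℝ) →
      a k ≤ (9 * d / q) * Real.log k / (k : ℝ) ^ (1 - ε)
        + a 1 * Real.exp (-(q * ((k : ℝ) ^ ε - 2) / ε)) := by
  intro k hk
  have hB := twelve_le_threshold hq0 hq1 hε0 hε1.le
  have hk0 : 0 < (k : ℝ) := (rpow_pos_of_pos (by linarith) _).trans_le hk
  have hBk : 12 / (q * ε) * log (4 / (q * ε)) ≤ (k : ℝ) ^ ε := by
    have := rpow_le_rpow (by positivity) hk hε0.le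
    rwa [← rpow_mul (by linarith), one_div_mul_cancel hε0.ne', rpow_one] at this
  have hlog := nine_add_log_le_mul_of_threshold_le hq0 hq1 hε0 hε1.le hBk
  have hk4 : 4 / q < (k : ℝ) ^ ε := by
    rw [div_lt_iff₀ hq0]
    linarith [log_nonneg (by linarith : (1 : ℝ) ≤ (k : ℝ) ^ ε)]
  have htail := two_div_mul_exp_le_log_div_rpow hε0 hε1.le hk0 (by linarith) hlog
  calc a k ≤ 7 * d / q * log k / (k : ℝ) ^ (1 - ε)
        + 2 * d / q * (2 / ε * exp ((8 - q * (k : ℝ) ^ ε) / ε))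
        + a 1 * exp (-(q * ((k : ℝ) ^ ε - 2) / ε)) := by
        convert le_log_div_rpow_add_exp hq0 hq1 hε0 hε1.le hd ha1 hrec hk4 using 2
        ring
    _ ≤ 7 * d / q * log k / (k : ℝ) ^ (1 - ε) + 2 * d / q * (log k / (k : ℝ) ^ (1 - ε))
        + a 1 * exp (-(q * ((k : ℝ) ^ ε - 2) / ε)) := by gcongr
    _ = 9 * d / q * log k / (k : ℝ) ^ (1 - ε) + a 1 * exp (-(q * ((k : ℝ) ^ ε - 2) / ε)) := by
        ring
end

section
/- Let q ∈ (0,1], ε ∈ (0,1), d ≥ 0, and let T be a positive integer. Let t_1 < t_2 < t_3 < … be positive integers with t_1 = 1 and t_{k+1} − t_k < T for all k ≥ 1, and let a : ℕ → ℝ satisfy a(t_1) ≥ 0 and a(t_{k+1}) ≤ (1 − q/t_{k+1}^{1−ε}) a(t_k) + d/t_k^{2−2ε} for every integer k ≥ 1. Then for every integer k ≥ [ (12T/(qε)) ln(4T/(qε)) ]^{1/ε}, one has a(t_k) ≤ (9dT/q) / k^{1−ε} + a(t_1) exp( −q(k^ε − 2)/(Tε) ). -/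
/-!
Write `x k = a (t k)`. Since `k ≤ t k` and `t (k + 1) ≤ k T`, the recursion becomes
`x (k + 1) ≤ (1 - c k) x k + d k^(2ε-2)` with `q / T · k^(ε-1) ≤ c k ≤ 1`, and Bernoulli's
inequality gives `1 - c k ≤ exp (-q ((k + 1)^ε - k^ε) / (T ε))`. By a discrete comparison
principle `x` stays below every supersolution of this recursion.
The function `x 1 · exp (-q (k^ε - 1) / (T ε)) + 2 d k^ε / ε` is one for all `k ≥ 1`.
Once `m^ε ≥ 2T / q`, so is `8 d T / q · k^(ε-1) + W exp (-q (k^ε - m^ε) / (T ε))` from `m` on: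
the steady part absorbs `d k^(2ε-2)` because `c k · k^(ε-1)` dominates `k^(2ε-2)`.
Taking `m^ε` between `2T / q` and `3T / q`, the transient
`2 d m^ε / ε · exp (-q (k^ε - m^ε) / (T ε))` drops below `d T / q · k^(ε-1)` as soon as
`k^ε ≥ 12 T / (q ε) · log (4T / (q ε))`.
-/

open Real

section RpowIncrements

variable {k ε : ℝ}

theorem rpow_add_one_sub_rpow_le (hk : 0 < k) (hε0 : 0 ≤ ε) (hε1 : ε ≤ 1) :
    (k + 1) ^ ε - k ^ ε ≤ ε * k ^ (ε - 1) := by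
  have hsplit : (k + 1) ^ ε = k ^ ε * (1 + k⁻¹) ^ ε := by
    rw [← mul_rpow hk.le (by positivity), mul_add, mul_one, mul_inv_cancel₀ hk.ne']
  have hbern := rpow_one_add_le_one_add_mul_self
    (by linarith [inv_pos.2 hk] : -1 ≤ k⁻¹) hε0 hε1
  rw [hsplit, rpow_sub_one hk.ne']
  have := mul_le_mul_of_nonneg_left hbern (rpow_nonneg hk.le ε)
  calc k ^ ε * (1 + k⁻¹) ^ ε - k ^ ε ≤ k ^ ε * (1 + ε * k⁻¹) - k ^ ε := by linarith
    _ = ε * (k ^ ε / k) := by ring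

theorem mul_rpow_sub_one_le_rpow_add_one_sub_rpow (hk : 0 ≤ k) (hε0 : 0 ≤ ε) (hε1 : ε ≤ 1) :
    ε * (k + 1) ^ (ε - 1) ≤ (k + 1) ^ ε - k ^ ε := by
  have hk1 : 0 < k + 1 := by linarith
  have hsplit : k ^ ε = (k + 1) ^ ε * (1 + -(k + 1)⁻¹) ^ ε := by
    rw [← mul_rpow hk1.le (by field_simp; linarith)]
    congr 1
    field_simp
    ring
  have hbern := rpow_one_add_le_one_add_mul_self
    (by linarith [inv_le_one_of_one_le₀ (by linarith : (1 : ℝ) ≤ k + 1)] : -1 ≤ -(k + 1)⁻¹)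
    hε0 hε1
  rw [hsplit, rpow_sub_one hk1.ne']
  have := mul_le_mul_of_nonneg_left hbern (rpow_nonneg hk1.le ε)
  calc ε * ((k + 1) ^ ε / (k + 1)) = (k + 1) ^ ε - (k + 1) ^ ε * (1 + ε * -(k + 1)⁻¹) := by
        ring
    _ ≤ _ := by linarith

theorem div_add_one_mul_rpow_sub_one_le (hk : 0 < k) (hε : 0 ≤ ε) :
    k / (k + 1) * k ^ (ε - 1) ≤ (k + 1) ^ (ε - 1) := by
  have hcancel : k / (k + 1) * (k ^ ε / k) = k ^ ε / (k + 1) := by field_simp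
  rw [rpow_sub_one hk.ne', rpow_sub_one (by positivity : k + 1 ≠ 0), hcancel]
  gcongr
  linarith

theorem rpow_sub_one_sub_rpow_sub_one_le (hk : 0 < k) (hε : 0 ≤ ε) :
    k ^ (ε - 1) - (k + 1) ^ (ε - 1) ≤ k ^ (ε - 1) / k := by
  have h := div_add_one_mul_rpow_sub_one_le hk hε
  have hP : 0 ≤ k ^ (ε - 1) := rpow_nonneg hk.le _
  have : k ^ (ε - 1) - k / (k + 1) * k ^ (ε - 1) ≤ k ^ (ε - 1) / k := by
    rw [show k ^ (ε - 1) - k / (k + 1) * k ^ (ε - 1) = k ^ (ε - 1) / (k + 1) by field_simp; ring]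
    gcongr
    linarith
  linarith

theorem mul_rpow_two_mul_sub_two_le (hk : 1 ≤ k) (hε0 : 0 ≤ ε) (hε1 : ε ≤ 1) :
    ε * k ^ (2 * ε - 2) ≤ 2 * ((k + 1) ^ ε - k ^ ε) := by
  have hk0 : 0 < k := by linarith
  have hsq : k ^ (2 * ε - 2) ≤ k ^ (ε - 1) := rpow_le_rpow_of_exponent_le hk (by linarith)
  have hhalf : k ^ (ε - 1) ≤ 2 * (k + 1) ^ (ε - 1) := by
    have h := div_add_one_mul_rpow_sub_one_le hk0 hε0
    have : 1 / 2 ≤ k / (k + 1) := by rw [div_le_div_iff₀ two_pos (by linarith)]; linarith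
    nlinarith [rpow_nonneg hk0.le (ε - 1)]
  have hincr := mul_rpow_sub_one_le_rpow_add_one_sub_rpow hk0.le hε0 hε1
  nlinarith

end RpowIncrements

theorem le_of_recursion_of_supersolution {x u c b : ℕ → ℝ} {m : ℕ}
    (hc : ∀ k, m ≤ k → c k ≤ 1)
    (hx : ∀ k, m ≤ k → x (k + 1) ≤ (1 - c k) * x k + b k)
    (hu : ∀ k, m ≤ k → (1 - c k) * u k + b k ≤ u (k + 1)) (hm : x m ≤ u m) :
    ∀ k, m ≤ k → x k ≤ u k := by
  intro k hk
  induction k, hk using Nat.le_induction with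
  | base => exact hm
  | succ k hk ih =>
    calc x (k + 1) ≤ (1 - c k) * x k + b k := hx k hk
      _ ≤ (1 - c k) * u k + b k := by gcongr; linarith [hc k hk]
      _ ≤ u (k + 1) := hu k hk

theorem exists_nat_rpow_mem_Icc {ε A : ℝ} (hε0 : 0 < ε) (hε1 : ε ≤ 1) (hA : 2 ≤ A) :
    ∃ m : ℕ, 1 ≤ m ∧ A ≤ (m : ℝ) ^ ε ∧ (m : ℝ) ^ ε ≤ 3 / 2 * A := by
  set X := A ^ ε⁻¹ with hX
  have hXε : X ^ ε = A := by rw [hX, ← rpow_mul (by linarith), inv_mul_cancel₀ hε0.ne', rpow_one]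
  have hAX : A ≤ X := self_le_rpow_of_one_le (by linarith) (one_le_inv₀ hε0 |>.2 hε1)
  have hm : X ≤ ⌈X⌉₊ := Nat.le_ceil X
  have hm' : (⌈X⌉₊ : ℝ) ≤ 3 / 2 * X := by linarith [Nat.ceil_lt_add_one (by linarith : 0 ≤ X)]
  refine ⟨⌈X⌉₊, by exact_mod_cast (by linarith : (1 : ℝ) ≤ ⌈X⌉₊), ?_, ?_⟩
  · rw [← hXε]; gcongr
  · calc (⌈X⌉₊ : ℝ) ^ ε ≤ (3 / 2 * X) ^ ε := by gcongr
      _ = (3 / 2) ^ ε * A := by rw [mul_rpow (by norm_num) (by linarith), hXε]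
      _ ≤ 3 / 2 * A := by gcongr; exact rpow_le_self_of_one_le (by norm_num) hε1

theorem one_le_log_of_three_le {Y : ℝ} (hY : 3 ≤ Y) : 1 ≤ log Y := by
  rw [le_log_iff_exp_le (by linarith)]
  linarith [exp_one_lt_d9]

theorem nine_add_log_le {Y s : ℝ} (hY : 3 ≤ Y) (hs : 3 * Y * log Y ≤ s) :
    9 + log s ≤ 4 * s / Y := by
  have hlogY := one_le_log_of_three_le hY
  set σ := s / Y with hσdef
  have hσ : 3 * log Y ≤ σ := by rw [hσdef, le_div_iff₀ (by linarith)]; linarith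
  have hs : s = Y * σ := by rw [hσdef]; field_simp
  rw [hs, log_mul (by positivity) (by linarith), mul_div_assoc,
    mul_div_cancel_left₀ σ (by positivity)]
  linarith [log_le_sub_one_of_pos (by linarith : 0 < σ)]

theorem three_le_four_mul_div {q ε T : ℝ} (hq0 : 0 < q) (hq1 : q ≤ 1) (hε0 : 0 < ε) (hε1 : ε ≤ 1)
    (hT : 1 ≤ T) : 3 ≤ 4 * T / (q * ε) := by
  rw [le_div_iff₀ (by positivity)]
  nlinarith [mul_le_one₀ hq1 hε0.le hε1]

theorem three_mul_div_le_of_threshold {q ε T s : ℝ} (hq0 : 0 < q) (hq1 : q ≤ 1) (hε0 : 0 < ε)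
    (hε1 : ε ≤ 1) (hT : 1 ≤ T) (hs : 12 * T / (q * ε) * log (4 * T / (q * ε)) ≤ s) :
    3 * T / q ≤ s := by
  have hlog := one_le_log_of_three_le (three_le_four_mul_div hq0 hq1 hε0 hε1 hT)
  have h : 3 * T / q ≤ 12 * T / (q * ε) := by
    rw [div_le_div_iff₀ hq0 (by positivity)]
    nlinarith [mul_pos (by linarith : (0 : ℝ) < T) hq0]
  nlinarith [(by positivity : 0 ≤ 12 * T / (q * ε))]

theorem mul_exp_neg_le_one (x : ℝ) : x * exp (-x) ≤ 1 := by
  rw [exp_neg, ← div_eq_mul_inv, div_le_one (exp_pos x)]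
  linarith [add_one_le_exp x]

theorem two_mul_div_mul_exp_le_mul_rpow {q ε T d M k : ℝ} (hq0 : 0 < q) (hq1 : q ≤ 1)
    (hε0 : 0 < ε) (hε1 : ε ≤ 1) (hT : 1 ≤ T) (hd : 0 ≤ d) (hk : 1 ≤ k) (hM : M ≤ 3 * T / q)
    (hks : 12 * T / (q * ε) * log (4 * T / (q * ε)) ≤ k ^ ε) :
    2 * d * M / ε * exp (-(q * (k ^ ε - M) / (T * ε))) ≤ d * T / q * k ^ (ε - 1) := by
  have hk0 : 0 < k := by linarith
  set Y := 4 * T / (q * ε) with hYdef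
  have hY : 3 ≤ Y := three_le_four_mul_div hq0 hq1 hε0 hε1 hT
  have hs : 3 * Y * log Y ≤ k ^ ε := by
    rw [show 3 * Y = 12 * T / (q * ε) by rw [hYdef]; ring]
    exact hks
  have hlog := nine_add_log_le hY hs
  rw [log_rpow hk0, hYdef, show 4 * k ^ ε / (4 * T / (q * ε)) = ε * (q * k ^ ε / T) by
    field_simp] at hlog
  have hlarge : 9 / ε + log k ≤ q * k ^ ε / (T * ε) := by
    have h1 : 9 / ε + log k ≤ q * k ^ ε / T := by
      rw [div_add' _ _ _ hε0.ne', div_le_iff₀ hε0]; linarith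
    have h2 : q * k ^ ε / T ≤ q * k ^ ε / (T * ε) := by
      gcongr; nlinarith
    linarith
  have hstart : q * M / (T * ε) ≤ 3 / ε := by
    have hqM : q * M ≤ 3 * T := (le_div_iff₀' hq0).1 hM
    calc q * M / (T * ε) ≤ 3 * T / (T * ε) := by gcongr
      _ = 3 / ε := by field_simp
  have hexp : exp (-(q * (k ^ ε - M) / (T * ε))) ≤ exp (-(6 / ε)) * k⁻¹ := by
    rw [← exp_log (inv_pos.2 hk0), log_inv, ← exp_add, exp_le_exp]
    have : -(q * (k ^ ε - M) / (T * ε)) = q * M / (T * ε) - q * k ^ ε / (T * ε) := by ring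
    have hsix : 3 / ε - 9 / ε = -(6 / ε) := by ring
    linarith
  have hinv : k⁻¹ ≤ k ^ (ε - 1) := by
    rw [← rpow_neg_one]
    exact rpow_le_rpow_of_exponent_le hk (by linarith)
  calc 2 * d * M / ε * exp (-(q * (k ^ ε - M) / (T * ε)))
      ≤ 2 * d * (3 * T / q) / ε * (exp (-(6 / ε)) * k⁻¹) := by gcongr
    _ = d * T / q * (6 / ε * exp (-(6 / ε))) * k⁻¹ := by ring
    _ ≤ d * T / q * 1 * k ^ (ε - 1) := by gcongr; exact mul_exp_neg_le_one _
    _ = d * T / q * k ^ (ε - 1) := by ring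

section Recursion

variable {q ε d T : ℝ}

theorem one_sub_mul_exp_le (hq : 0 ≤ q) (hT : 0 < T) (hε0 : 0 < ε) (hε1 : ε ≤ 1)
    {k c W : ℝ} (hk : 0 < k) (hc : q / T * k ^ (ε - 1) ≤ c) (hW : 0 ≤ W) (s : ℝ) :
    (1 - c) * (W * exp (-(q * (k ^ ε - s) / (T * ε)))) ≤
      W * exp (-(q * ((k + 1) ^ ε - s) / (T * ε))) := by
  have hstep : q * ((k + 1) ^ ε - k ^ ε) / (T * ε) ≤ c := by
    calc q * ((k + 1) ^ ε - k ^ ε) / (T * ε) = q / (T * ε) * ((k + 1) ^ ε - k ^ ε) := by ring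
      _ ≤ q / (T * ε) * (ε * k ^ (ε - 1)) := by
          gcongr; exact rpow_add_one_sub_rpow_le hk hε0.le hε1
      _ = q / T * k ^ (ε - 1) := by field_simp
      _ ≤ c := hc
  have hdecay : 1 - c ≤ exp (-(q * ((k + 1) ^ ε - k ^ ε) / (T * ε))) := by
    linarith [add_one_le_exp (-c), exp_le_exp.2 (neg_le_neg hstep)]
  calc (1 - c) * (W * exp (-(q * (k ^ ε - s) / (T * ε))))
      ≤ exp (-(q * ((k + 1) ^ ε - k ^ ε) / (T * ε))) *
          (W * exp (-(q * (k ^ ε - s) / (T * ε)))) := by gcongr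
    _ = W * exp (-(q * ((k + 1) ^ ε - s) / (T * ε))) := by
        rw [mul_left_comm, ← exp_add]; congr 2; ring

variable {c x : ℕ → ℝ}

theorem le_exp_add_of_recursion (hq : 0 ≤ q) (hT : 0 < T) (hε0 : 0 < ε) (hε1 : ε ≤ 1)
    (hd : 0 ≤ d) (hc : ∀ k : ℕ, 1 ≤ k → q / T * (k : ℝ) ^ (ε - 1) ≤ c k)
    (hc1 : ∀ k : ℕ, 1 ≤ k → c k ≤ 1)
    (hx : ∀ k : ℕ, 1 ≤ k → x (k + 1) ≤ (1 - c k) * x k + d * (k : ℝ) ^ (2 * ε - 2))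
    (hx1 : 0 ≤ x 1) :
    ∀ k : ℕ, 1 ≤ k →
      x k ≤ x 1 * exp (-(q * ((k : ℝ) ^ ε - 1) / (T * ε))) + 2 * d * (k : ℝ) ^ ε / ε := by
  refine le_of_recursion_of_supersolution hc1 hx (fun k hk => ?_) ?_
  · have hk1 : (1 : ℝ) ≤ k := by exact_mod_cast hk
    have hc0 : 0 ≤ c k := le_trans (by positivity) (hc k hk)
    have hexp := one_sub_mul_exp_le hq hT hε0 hε1 (by linarith) (hc k hk) hx1 1
    have hpoly : d * (k : ℝ) ^ (2 * ε - 2) ≤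
        2 * d * ((k : ℝ) + 1) ^ ε / ε - 2 * d * (k : ℝ) ^ ε / ε := by
      rw [← sub_div, le_div_iff₀ hε0]
      nlinarith [mul_rpow_two_mul_sub_two_le hk1 hε0.le hε1]
    have hv : (1 - c k) * (2 * d * (k : ℝ) ^ ε / ε) ≤ 2 * d * (k : ℝ) ^ ε / ε :=
      mul_le_of_le_one_left (by positivity) (by linarith)
    push_cast
    linarith [mul_add (1 - c k) (x 1 * exp (-(q * ((k : ℝ) ^ ε - 1) / (T * ε))))
      (2 * d * (k : ℝ) ^ ε / ε)]
  · simp only [Nat.cast_one, one_rpow, sub_self, mul_zero, zero_div, neg_zero, exp_zero, mul_one,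
      le_add_iff_nonneg_right]
    positivity

theorem le_rpow_add_exp_of_recursion (hq : 0 < q) (hT : 0 < T) (hε0 : 0 < ε) (hε1 : ε ≤ 1)
    (hd : 0 ≤ d) (hc : ∀ k : ℕ, 1 ≤ k → q / T * (k : ℝ) ^ (ε - 1) ≤ c k)
    (hc1 : ∀ k : ℕ, 1 ≤ k → c k ≤ 1)
    (hx : ∀ k : ℕ, 1 ≤ k → x (k + 1) ≤ (1 - c k) * x k + d * (k : ℝ) ^ (2 * ε - 2))
    {m : ℕ} (hm : 1 ≤ m) (hmq : 2 * T / q ≤ (m : ℝ) ^ ε) {W : ℝ} (hW : 0 ≤ W) (hxm : x m ≤ W) :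
    ∀ k, m ≤ k → x k ≤ 8 * d * T / q * (k : ℝ) ^ (ε - 1)
      + W * exp (-(q * ((k : ℝ) ^ ε - (m : ℝ) ^ ε) / (T * ε))) := by
  refine le_of_recursion_of_supersolution (fun k hk => hc1 k (hm.trans hk))
    (fun k hk => hx k (hm.trans hk)) (fun k hk => ?_) ?_
  · have hk1 : (1 : ℝ) ≤ k := by exact_mod_cast hm.trans hk
    have hk0 : (0 : ℝ) < k := by linarith
    have hexp := one_sub_mul_exp_le hq.le hT hε0 hε1 hk0 (hc k (hm.trans hk)) hW ((m : ℝ) ^ ε)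
    set P := (k : ℝ) ^ (ε - 1) with hPdef
    have hP : 0 ≤ P := rpow_nonneg hk0.le _
    have hsq : (k : ℝ) ^ (2 * ε - 2) = P * P := by
      rw [← rpow_add hk0]; ring_nf
    have hkε : (k : ℝ) ^ ε = P * k := by
      rw [hPdef, rpow_sub_one hk0.ne']; field_simp
    have hcP : q / T * P * P ≤ c k * P := mul_le_mul_of_nonneg_right (hc k (hm.trans hk)) hP
    have hgrowth : 2 * T / q * (P / k) ≤ P * P := by
      calc 2 * T / q * (P / k) ≤ (k : ℝ) ^ ε * (P / k) := by
            gcongr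
            exact hmq.trans (rpow_le_rpow (by positivity) (by exact_mod_cast hk) hε0.le)
        _ = P * P := by rw [hkε]; field_simp
    have hdecr := rpow_sub_one_sub_rpow_sub_one_le hk0 hε0.le
    have hsteady : (1 - c k) * (8 * d * T / q * P) + d * (P * P) ≤
        8 * d * T / q * ((k : ℝ) + 1) ^ (ε - 1) := by
      have e1 : 8 * d * T / q * (q / T * P * P) = 8 * d * (P * P) := by field_simp
      have e2 : 8 * d * T / q * (P / k) = 4 * d * (2 * T / q * (P / k)) := by ring
      have h1 := mul_le_mul_of_nonneg_left hcP (by positivity : 0 ≤ 8 * d * T / q)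
      have h2 := mul_le_mul_of_nonneg_left hdecr (by positivity : 0 ≤ 8 * d * T / q)
      have h3 := mul_le_mul_of_nonneg_left hgrowth (by positivity : 0 ≤ 4 * d)
      nlinarith [mul_nonneg hd (mul_nonneg hP hP)]
    rw [hsq]
    push_cast
    linarith [mul_add (1 - c k) (8 * d * T / q * P)
      (W * exp (-(q * ((k : ℝ) ^ ε - (m : ℝ) ^ ε) / (T * ε))))]
  · simp only [sub_self, mul_zero, zero_div, neg_zero, exp_zero, mul_one]
    have : 0 ≤ 8 * d * T / q * (m : ℝ) ^ (ε - 1) := by positivity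
    linarith

theorem le_of_recursion_of_threshold (hq0 : 0 < q) (hq1 : q ≤ 1) (hε0 : 0 < ε) (hε1 : ε ≤ 1)
    (hT : 1 ≤ T) (hd : 0 ≤ d) (hc : ∀ k : ℕ, 1 ≤ k → q / T * (k : ℝ) ^ (ε - 1) ≤ c k)
    (hc1 : ∀ k : ℕ, 1 ≤ k → c k ≤ 1)
    (hx : ∀ k : ℕ, 1 ≤ k → x (k + 1) ≤ (1 - c k) * x k + d * (k : ℝ) ^ (2 * ε - 2))
    (hx1 : 0 ≤ x 1) {k : ℕ} (hk : 12 * T / (q * ε) * log (4 * T / (q * ε)) ≤ (k : ℝ) ^ ε) :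
    x k ≤ 9 * d * T / q * (k : ℝ) ^ (ε - 1) + x 1 * exp (-(q * ((k : ℝ) ^ ε - 1) / (T * ε))) := by
  have hT0 : 0 < T := by linarith
  obtain ⟨m, hm1, hmlow, hmup⟩ := exists_nat_rpow_mem_Icc hε0 hε1
    (by rw [le_div_iff₀ hq0]; nlinarith : (2 : ℝ) ≤ 2 * T / q)
  rw [show 3 / 2 * (2 * T / q) = 3 * T / q by ring] at hmup
  have hmk : m ≤ k := by
    have := hmup.trans (three_mul_div_le_of_threshold hq0 hq1 hε0 hε1 hT hk)
    exact_mod_cast (rpow_le_rpow_iff m.cast_nonneg k.cast_nonneg hε0).1 this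
  have htransient := le_exp_add_of_recursion hq0.le hT0 hε0 hε1 hd hc hc1 hx hx1 m hm1
  have hsteady := le_rpow_add_exp_of_recursion hq0 hT0 hε0 hε1 hd hc hc1 hx hm1 hmlow
    (by positivity) htransient k hmk
  have htail := two_mul_div_mul_exp_le_mul_rpow hq0 hq1 hε0 hε1 hT hd
    (by exact_mod_cast hm1.trans hmk) hmup hk
  have hexp : exp (-(q * ((m : ℝ) ^ ε - 1) / (T * ε))) *
      exp (-(q * ((k : ℝ) ^ ε - m ^ ε) / (T * ε))) = exp (-(q * ((k : ℝ) ^ ε - 1) / (T * ε))) := by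
    rw [← exp_add]; ring_nf
  rw [add_mul, mul_assoc (x 1), hexp] at hsteady
  have hnine : 9 * d * T / q * (k : ℝ) ^ (ε - 1) =
      8 * d * T / q * (k : ℝ) ^ (ε - 1) + d * T / q * (k : ℝ) ^ (ε - 1) := by ring
  linarith

end Recursion

theorem self_le_of_lt_succ {t : ℕ → ℕ} (ht1 : 1 ≤ t 1) (hmono : ∀ k : ℕ, 1 ≤ k → t k < t (k + 1)) :
    ∀ k : ℕ, 1 ≤ k → k ≤ t k := by
  intro k hk
  induction k, hk using Nat.le_induction with
  | base => exact ht1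
  | succ k hk ih => exact (ih.trans_lt (hmono k hk)).succ_le

theorem succ_le_mul_of_gap {t : ℕ → ℕ} {T : ℕ} (ht1 : t 1 ≤ 1)
    (hgap : ∀ k : ℕ, 1 ≤ k → t (k + 1) < t k + T) : ∀ k : ℕ, 1 ≤ k → t (k + 1) ≤ k * T := by
  have h : ∀ k : ℕ, t (k + 1) + k ≤ k * T + 1 := by
    intro k
    induction k with
    | zero => simpa using ht1
    | succ k ih =>
      have := hgap (k + 1) (by omega)
      rw [Nat.succ_mul]
      omega
  intro k hk
  have := h k
  omega

theorem div_mul_rpow_le_div_rpow {q ε T k τ : ℝ} (hq : 0 ≤ q) (hε0 : 0 ≤ ε) (hε1 : ε ≤ 1)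
    (hT : 1 ≤ T) (hk : 0 < k) (hτ0 : 0 < τ) (hτ : τ ≤ k * T) :
    q / T * k ^ (ε - 1) ≤ q / τ ^ (1 - ε) := by
  have hτT : τ ^ (1 - ε) ≤ k ^ (1 - ε) * T :=
    calc τ ^ (1 - ε) ≤ (k * T) ^ (1 - ε) := by gcongr
      _ = k ^ (1 - ε) * T ^ (1 - ε) := mul_rpow hk.le (by linarith)
      _ ≤ k ^ (1 - ε) * T := by gcongr; exact rpow_le_self_of_one_le hT (by linarith)
  calc q / T * k ^ (ε - 1) = q / (k ^ (1 - ε) * T) := by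
        rw [show ε - 1 = -(1 - ε) by ring, rpow_neg hk.le]; field_simp
    _ ≤ q / τ ^ (1 - ε) := by gcongr

theorem div_rpow_le_one_s12 {q ε τ : ℝ} (hq : q ≤ 1) (hε : ε ≤ 1) (hτ : 1 ≤ τ) :
    q / τ ^ (1 - ε) ≤ 1 := by
  have h1 : 1 ≤ τ ^ (1 - ε) := one_le_rpow hτ (by linarith)
  rw [div_le_one (by linarith)]
  linarith

theorem div_rpow_le_mul_rpow {d ε k τ : ℝ} (hd : 0 ≤ d) (hε : ε ≤ 1) (hk : 0 < k) (hkτ : k ≤ τ) :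
    d / τ ^ (2 - 2 * ε) ≤ d * k ^ (2 * ε - 2) := by
  calc d / τ ^ (2 - 2 * ε) ≤ d / k ^ (2 - 2 * ε) := by gcongr; linarith
    _ = d * k ^ (2 * ε - 2) := by
        rw [show 2 * ε - 2 = -(2 - 2 * ε) by ring, rpow_neg hk.le, div_eq_mul_inv]

/-- decay of a sequence along measurement times `t_k` with
`t_1 = 1`, `t_{k+1} - t_k < T`, satisfying
`a(t_{k+1}) ≤ (1 - q/t_{k+1}^(1-ε)) a(t_k) + d/t_k^(2-2ε)`. -/
theorem stmt12 (q ε d : ℝ) (T : ℕ) (hT : 0 < T)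
    (hq0 : 0 < q) (hq1 : q ≤ 1) (hε0 : 0 < ε) (hε1 : ε < 1) (hd : 0 ≤ d)
    (t : ℕ → ℕ) (ht1 : t 1 = 1)
    (hmono : ∀ k : ℕ, 1 ≤ k → t k < t (k + 1))
    (hgap : ∀ k : ℕ, 1 ≤ k → t (k + 1) < t k + T)
    (a : ℕ → ℝ) (ha1 : 0 ≤ a (t 1))
    (hrec : ∀ k : ℕ, 1 ≤ k →
      a (t (k + 1)) ≤ (1 - q / (t (k + 1) : ℝ) ^ (1 - ε)) * a (t k)
        + d / (t k : ℝ) ^ (2 - 2 * ε)) :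
    ∀ k : ℕ, (12 * T / (q * ε) * Real.log (4 * T / (q * ε))) ^ (1 / ε) ≤ (k : ℝ) →
      a (t k) ≤ (9 * d * T / q) / (k : ℝ) ^ (1 - ε)
        + a (t 1) * Real.exp (-(q * ((k : ℝ) ^ ε - 1) / (T * ε))) := by
  intro k hk
  have hT1 : (1 : ℝ) ≤ T := by exact_mod_cast hT
  have ht_ge := self_le_of_lt_succ ht1.ge hmono
  have ht_succ (k : ℕ) : (k : ℝ) + 1 ≤ t (k + 1) := by exact_mod_cast ht_ge (k + 1) (by omega)
  have hks : 12 * T / (q * ε) * log (4 * T / (q * ε)) ≤ (k : ℝ) ^ ε := by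
    have := one_le_log_of_three_le (three_le_four_mul_div hq0 hq1 hε0 hε1.le hT1)
    rwa [one_div, rpow_inv_le_iff_of_pos (by positivity) k.cast_nonneg hε0] at hk
  rw [show 1 - ε = -(ε - 1) by ring, rpow_neg k.cast_nonneg, div_inv_eq_mul]
  refine le_of_recursion_of_threshold (x := fun k => a (t k))
    (c := fun k => q / (t (k + 1) : ℝ) ^ (1 - ε)) hq0 hq1 hε0 hε1.le hT1 hd
    (fun k hk => ?_) (fun k _ => ?_) (fun k hk => ?_) ha1 hks
  · exact div_mul_rpow_le_div_rpow hq0.le hε0.le hε1.le hT1 (by positivity)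
      (by linarith [ht_succ k]) (by exact_mod_cast succ_le_mul_of_gap ht1.le hgap k hk)
  · exact div_rpow_le_one_s12 hq1 hε1.le (by linarith [ht_succ k, k.cast_nonneg (α := ℝ)])
  · refine (hrec k hk).trans ?_
    gcongr
    exact div_rpow_le_mul_rpow hd hε1.le (by positivity) (by exact_mod_cast ht_ge k hk)
end

section
/- Let G be a simple undirected graph on {1,…,n} with edge set E and degrees d_i, let S ⊆ {1,…,n}, and let A be the associated alignment matrix. Then for every v ∈ ℝⁿ and every μ ∈ ℝ, ‖A(v − μ𝟙)‖₂² ≤ ‖v − μ𝟙‖₂² − (1/8) Σ_{{k,l}∈E} (v_k − v_l)²/max(d_k, d_l) − (1/4) Σ_{k∈S} (v_k − μ)², where 𝟙 ∈ ℝⁿ is the all-ones vector and each unordered edge {k,l} is counted once in the sum. -/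
/-!
Write `A = D_S - L`, where `D_S` is the diagonal matrix with entries `3/4` on `S` and `1`
elsewhere and `L` is the Laplacian of the edge weights `w_{ij} = 1/(4 max(d_i, d_j))`.
Then `xᵀ A x = ‖x‖² - (1/4) Σ_{k∈S} x_k² - (1/2) Σ_{i,j} w_{ij} (x_i - x_j)²`, and since every
row sum of `w` is at most `1/4` this quadratic form lies between `0` and `‖x‖²`. A symmetric
matrix with `0 ≤ A ≤ I` satisfies `‖A x‖² ≤ xᵀ A x`, and the Laplacian term does not see the
shift by `μ𝟙`.
-/

open Finset Matrix

section Symmetric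

variable {ι : Type*} [Fintype ι]

theorem Matrix.IsSymm.dotProduct_mulVec_comm {A : Matrix ι ι ℝ} (hA : A.IsSymm) (a b : ι → ℝ) :
    a ⬝ᵥ A *ᵥ b = b ⬝ᵥ A *ᵥ a := by
  rw [dotProduct_mulVec, ← mulVec_transpose, hA.eq, dotProduct_comm]

theorem Matrix.IsSymm.mulVec_dotProduct_mulVec_le {A : Matrix ι ι ℝ} (hA : A.IsSymm)
    (h0 : ∀ x, 0 ≤ x ⬝ᵥ A *ᵥ x) (h1 : ∀ x, x ⬝ᵥ A *ᵥ x ≤ x ⬝ᵥ x) (x : ι → ℝ) :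
    A *ᵥ x ⬝ᵥ A *ᵥ x ≤ x ⬝ᵥ A *ᵥ x := by
  -- `0 ≤ A` at `x - A x` and `A ≤ 1` at `A x`; symmetry identifies the cross terms with `‖A x‖²`.
  have hAx := h1 (A *ᵥ x)
  have hdiff := h0 (x - A *ᵥ x)
  rw [mulVec_sub, dotProduct_sub, sub_dotProduct, sub_dotProduct,
    hA.dotProduct_mulVec_comm x (A *ᵥ x)] at hdiff
  linarith

theorem Matrix.IsSymm.sum_sum_mul_right {W : Matrix ι ι ℝ} (hW : W.IsSymm) (f : ι → ℝ) :
    ∑ i, ∑ j, W i j * f j = ∑ i, (∑ j, W i j) * f i := by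
  rw [Finset.sum_comm]
  refine Finset.sum_congr rfl fun i _ => ?_
  rw [Finset.sum_mul]
  exact Finset.sum_congr rfl fun j _ => by rw [hW.apply]

theorem sum_sum_mul_sub_sq_le {W : Matrix ι ι ℝ} (hW : W.IsSymm) (hnonneg : ∀ i j, 0 ≤ W i j)
    {r : ℝ} (hr : ∀ i, ∑ j, W i j ≤ r) (x : ι → ℝ) :
    ∑ i, ∑ j, W i j * (x i - x j) ^ 2 ≤ 4 * r * ∑ i, x i ^ 2 := by
  calc ∑ i, ∑ j, W i j * (x i - x j) ^ 2
      ≤ ∑ i, ∑ j, (2 * (W i j * x i ^ 2) + 2 * (W i j * x j ^ 2)) := by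
        gcongr with i _ j _
        nlinarith [mul_nonneg (hnonneg i j) (sq_nonneg (x i + x j))]
    _ = 4 * ∑ i, (∑ j, W i j) * x i ^ 2 := by
        simp only [Finset.sum_add_distrib, ← Finset.mul_sum, hW.sum_sum_mul_right, ← Finset.sum_mul]
        ring
    _ ≤ 4 * ∑ i, r * x i ^ 2 := by
        gcongr with i _
        exact hr i
    _ = 4 * r * ∑ i, x i ^ 2 := by rw [← Finset.mul_sum, mul_assoc]

variable [DecidableEq ι]

def weightedLaplacian (W : Matrix ι ι ℝ) : Matrix ι ι ℝ :=
  diagonal (fun i => ∑ j, W i j) - W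

theorem Matrix.IsSymm.weightedLaplacian {W : Matrix ι ι ℝ} (hW : W.IsSymm) :
    (weightedLaplacian W).IsSymm :=
  (isSymm_diagonal _).sub hW

theorem dotProduct_weightedLaplacian_mulVec {W : Matrix ι ι ℝ} (hW : W.IsSymm) (x : ι → ℝ) :
    x ⬝ᵥ weightedLaplacian W *ᵥ x = (∑ i, ∑ j, W i j * (x i - x j) ^ 2) / 2 := by
  have hexpand : ∀ i j, W i j * (x i - x j) ^ 2
      = W i j * x i ^ 2 - 2 * (x i * (W i j * x j)) + W i j * x j ^ 2 := fun i j => by ring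
  have hdiag : x ⬝ᵥ diagonal (fun i => ∑ j, W i j) *ᵥ x = ∑ i, (∑ j, W i j) * x i ^ 2 := by
    simp only [dotProduct, mulVec_diagonal]
    exact Finset.sum_congr rfl fun i _ => by ring
  simp only [weightedLaplacian, sub_mulVec, dotProduct_sub, hdiag, hexpand, Finset.sum_add_distrib,
    Finset.sum_sub_distrib, ← Finset.mul_sum, hW.sum_sum_mul_right, ← Finset.sum_mul]
  simp only [dotProduct, mulVec]
  ring

end Symmetric

namespace SimpleGraph

variable {V : Type*} [Fintype V] (G : SimpleGraph V) [DecidableRel G.Adj]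

noncomputable def alignmentWeight : Matrix V V ℝ :=
  Matrix.of fun i j => if G.Adj i j then 1 / (4 * ((max (G.degree i) (G.degree j) : ℕ) : ℝ)) else 0

theorem alignmentWeight_isSymm : G.alignmentWeight.IsSymm := by
  ext i j
  simp only [alignmentWeight, transpose_apply, of_apply, G.adj_comm i j, max_comm (G.degree i)]

theorem alignmentWeight_nonneg (i j : V) : 0 ≤ G.alignmentWeight i j := by
  rw [alignmentWeight, of_apply]
  split_ifs <;> positivity

theorem sum_alignmentWeight (i : V) :
    ∑ j, G.alignmentWeight i j
      = ∑ j ∈ G.neighborFinset i, 1 / (4 * ((max (G.degree i) (G.degree j) : ℕ) : ℝ)) := by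
  rw [G.neighborFinset_eq_filter, Finset.sum_filter]
  rfl

theorem sum_alignmentWeight_le (i : V) : ∑ j, G.alignmentWeight i j ≤ 1 / 4 := by
  rw [sum_alignmentWeight]
  calc ∑ j ∈ G.neighborFinset i, 1 / (4 * ((max (G.degree i) (G.degree j) : ℕ) : ℝ))
      ≤ ∑ _j ∈ G.neighborFinset i, 1 / (4 * (G.degree i : ℝ)) := by
        gcongr with j hj
        · have : 0 < G.degree i :=
            (G.degree_pos_iff_exists_adj i).2 ⟨j, (G.mem_neighborFinset i j).1 hj⟩
          positivity
        · exact le_max_left _ _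
    _ = (G.degree i : ℝ) / (4 * G.degree i) := by
        rw [Finset.sum_const, G.card_neighborFinset_eq_degree, nsmul_eq_mul, mul_one_div]
    _ ≤ 1 / 4 := by
        rw [div_mul_eq_div_div_swap]
        exact div_le_div_of_nonneg_right (div_self_le_one _) (by norm_num)

theorem sum_sum_alignmentWeight_mul_sub_sq (x : V → ℝ) :
    ∑ i, ∑ j, G.alignmentWeight i j * (x i - x j) ^ 2
      = (1 / 4) * ∑ i, ∑ j,
          if G.Adj i j then (x i - x j) ^ 2 / ((max (G.degree i) (G.degree j) : ℕ) : ℝ) else 0 := by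
  simp only [Finset.mul_sum, alignmentWeight, of_apply]
  refine Finset.sum_congr rfl fun i _ => Finset.sum_congr rfl fun j _ => ?_
  split_ifs <;> ring

variable [DecidableEq V] (S : Finset V)

noncomputable def alignmentMatrix : Matrix V V ℝ :=
  diagonal (fun i => if i ∈ S then 3 / 4 else 1) - weightedLaplacian G.alignmentWeight

theorem alignmentMatrix_isSymm : (G.alignmentMatrix S).IsSymm :=
  (isSymm_diagonal _).sub G.alignmentWeight_isSymm.weightedLaplacian

theorem eq_alignmentMatrix {A : Matrix V V ℝ}
    (hAadj : ∀ i j, G.Adj i j →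
      A i j = 1 / (4 * ((max (G.degree i) (G.degree j) : ℕ) : ℝ)))
    (hAoff : ∀ i j, i ≠ j → ¬ G.Adj i j → A i j = 0)
    (hAdiagOut : ∀ i ∉ S, A i i
      = 1 - ∑ j ∈ G.neighborFinset i, 1 / (4 * ((max (G.degree i) (G.degree j) : ℕ) : ℝ)))
    (hAdiagIn : ∀ i ∈ S, A i i
      = 3 / 4 - ∑ j ∈ G.neighborFinset i, 1 / (4 * ((max (G.degree i) (G.degree j) : ℕ) : ℝ))) :
    A = G.alignmentMatrix S := by
  ext i j
  simp only [alignmentMatrix, weightedLaplacian, Matrix.sub_apply]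
  obtain rfl | hij := eq_or_ne i j
  · rw [diagonal_apply_eq, diagonal_apply_eq, sum_alignmentWeight, alignmentWeight, of_apply,
      if_neg (G.irrefl (v := i)), sub_zero]
    split_ifs with hi
    · exact hAdiagIn i hi
    · exact hAdiagOut i hi
  · rw [diagonal_apply_ne _ hij, diagonal_apply_ne _ hij, zero_sub, zero_sub, neg_neg,
      alignmentWeight, of_apply]
    split_ifs with hadj
    · exact hAadj i j hadj
    · exact hAoff i j hij hadj

theorem dotProduct_alignmentMatrix_mulVec (x : V → ℝ) :
    x ⬝ᵥ G.alignmentMatrix S *ᵥ x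
      = ∑ i, x i ^ 2 - (1 / 4) * ∑ i ∈ S, x i ^ 2
        - (∑ i, ∑ j, G.alignmentWeight i j * (x i - x j) ^ 2) / 2 := by
  have hdiag : x ⬝ᵥ diagonal (fun i => if i ∈ S then 3 / 4 else 1) *ᵥ x
      = ∑ i, x i ^ 2 - (1 / 4) * ∑ i ∈ S, x i ^ 2 := by
    have hentry : ∀ i, x i * ((if i ∈ S then 3 / 4 else 1) * x i)
        = x i ^ 2 - if i ∈ S then 1 / 4 * x i ^ 2 else 0 := fun i => by split_ifs <;> ring
    simp only [dotProduct, mulVec_diagonal, hentry, Finset.sum_sub_distrib, Finset.sum_ite_mem,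
      univ_inter, Finset.mul_sum]
  rw [alignmentMatrix, sub_mulVec, dotProduct_sub, hdiag,
    dotProduct_weightedLaplacian_mulVec G.alignmentWeight_isSymm]

theorem dotProduct_alignmentMatrix_mulVec_nonneg (x : V → ℝ) :
    0 ≤ x ⬝ᵥ G.alignmentMatrix S *ᵥ x := by
  have hS : ∑ i ∈ S, x i ^ 2 ≤ ∑ i, x i ^ 2 :=
    Finset.sum_le_univ_sum_of_nonneg fun i => sq_nonneg (x i)
  have hL := sum_sum_mul_sub_sq_le G.alignmentWeight_isSymm G.alignmentWeight_nonneg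
    G.sum_alignmentWeight_le x
  have hsq : 0 ≤ ∑ i, x i ^ 2 := Finset.sum_nonneg fun i _ => sq_nonneg (x i)
  rw [dotProduct_alignmentMatrix_mulVec]
  linarith

theorem dotProduct_alignmentMatrix_mulVec_le (x : V → ℝ) :
    x ⬝ᵥ G.alignmentMatrix S *ᵥ x ≤ x ⬝ᵥ x := by
  have hS : 0 ≤ ∑ i ∈ S, x i ^ 2 := Finset.sum_nonneg fun i _ => sq_nonneg (x i)
  have hL : 0 ≤ ∑ i, ∑ j, G.alignmentWeight i j * (x i - x j) ^ 2 :=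
    Finset.sum_nonneg fun i _ => Finset.sum_nonneg fun j _ =>
      mul_nonneg (G.alignmentWeight_nonneg i j) (sq_nonneg _)
  rw [dotProduct_alignmentMatrix_mulVec, dotProduct]
  simp only [← sq]
  linarith

end SimpleGraph

/-- For the alignment matrix `A` associated with a graph `G` and a
measurement set `S`, and any `v ∈ ℝⁿ`, `μ ∈ ℝ`:
`‖A(v - μ𝟙)‖₂² ≤ ‖v - μ𝟙‖₂² - (1/8) Σ_{{k,l}∈E} (v_k - v_l)²/max(d_k,d_l)
 - (1/4) Σ_{k∈S} (v_k - μ)²`.  (The sum over unordered edges is written as half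
the sum over ordered adjacent pairs.) -/
theorem stmt13 (n : ℕ) (G : SimpleGraph (Fin n)) [DecidableRel G.Adj]
    (S : Finset (Fin n)) (A : Matrix (Fin n) (Fin n) ℝ)
    (hAadj : ∀ i j, G.Adj i j →
      A i j = 1 / (4 * ((max (G.degree i) (G.degree j) : ℕ) : ℝ)))
    (hAoff : ∀ i j, i ≠ j → ¬ G.Adj i j → A i j = 0)
    (hAdiagOut : ∀ i ∉ S, A i i
      = 1 - ∑ j ∈ G.neighborFinset i, 1 / (4 * ((max (G.degree i) (G.degree j) : ℕ) : ℝ)))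
    (hAdiagIn : ∀ i ∈ S, A i i
      = 3 / 4 - ∑ j ∈ G.neighborFinset i, 1 / (4 * ((max (G.degree i) (G.degree j) : ℕ) : ℝ)))
    (v : Fin n → ℝ) (μ : ℝ) :
    ∑ i, (A.mulVec (fun j => v j - μ) i) ^ 2
      ≤ ∑ i, (v i - μ) ^ 2
        - (1 / 8) * ((1 / 2) * ∑ k, ∑ l,
            if G.Adj k l then (v k - v l) ^ 2 / ((max (G.degree k) (G.degree l) : ℕ) : ℝ) else 0)
        - (1 / 4) * ∑ k ∈ S, (v k - μ) ^ 2 := by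
  obtain rfl := G.eq_alignmentMatrix S hAadj hAoff hAdiagOut hAdiagIn
  have hcontract := (G.alignmentMatrix_isSymm S).mulVec_dotProduct_mulVec_le
    (G.dotProduct_alignmentMatrix_mulVec_nonneg S) (G.dotProduct_alignmentMatrix_mulVec_le S)
    (fun j => v j - μ)
  have hshift := G.sum_sum_alignmentWeight_mul_sub_sq v
  have henergy : 0 ≤ ∑ k, ∑ l,
      if G.Adj k l then (v k - v l) ^ 2 / ((max (G.degree k) (G.degree l) : ℕ) : ℝ) else 0 :=
    Finset.sum_nonneg fun k _ => Finset.sum_nonneg fun l _ => by split_ifs <;> positivity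
  rw [G.dotProduct_alignmentMatrix_mulVec] at hcontract
  simp only [sub_sub_sub_cancel_right, dotProduct, ← sq] at hcontract
  linarith
end

section
/- Consider the cooperative learning protocol with l = 1 (so μ ∈ ℝ and all v_i(t) ∈ ℝ) started at an initial time t₀ with deterministic initial values v_1(t₀), …, v_n(t₀). Fix an integer t₁ > t₀ and assume: Δ(m) ∈ (0,1) for every m with t₀ ≤ m < t₁; the graph on {1,…,n} with edge set ⋃_{m=t₀}^{t₁−1} E(m) is connected; S(m) ≠ ∅ for at least one m with t₀ ≤ m < t₁; the initial values are strictly sorted, v_1(t₀) < v_2(t₀) < ⋯ < v_n(t₀), and none of them equals μ; and there exist indices i with v_i(t₀) < μ and indices i with v_i(t₀) > μ. Let p₋ be the largest index with v_{p₋}(t₀) < μ and p₊ the smallest index with v_{p₊}(t₀) > μ. Then Σ_{m=t₀}^{t₁−1} [ Σ_{{k,l}∈E(m)} E[(v_k(m) − v_l(m))²] + Σ_{k∈S(m)} E[(v_k(m) − μ)²] ] ≥ (v_{p₋}(t₀) − μ)² + (v_{p₊}(t₀) − μ)² + Σ_{i∈{1,…,n−1}, i≠p₋} (v_i(t₀)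 − v_{i+1}(t₀))², where each unordered edge {k,l} of E(m) is counted once. -/
/-!
Taking expectations, the means `x t i = E[v t i]` follow the noiseless protocol (the noise is
centred), and by Jensen each expected square in the right-hand side dominates the corresponding
square of means; so it suffices to prove the bound for the deterministic mean dynamics.

Insert `μ` into the sorted initial values; the left-hand side is the sum of the squared gaps of
this sorted sequence. Since `Δ ≤ 2`, one step replaces each value by a convex combination of itself,
its neighbours' values and `μ`. Hence, for a gap `(a, b)`, as long as no edge joins a value `≤ a` to
a value `≥ b` and no measuring agent lies on the other side of the gap from `μ`, the values `≤ a`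
stay `≤ a` and those `≥ b` stay `≥ b`; connectivity of the union graph then forces some edge or
measurement term of the window to span the gap. A term spanning several gaps dominates the sum of
their squares (the square of a sum of nonnegative numbers dominates the sum of the squares), and
summing over all gaps gives the inequality.
-/

open Finset MeasureTheory ProbabilityTheory

lemma sum_sq_gaps_le_sq {Z : ℕ → ℝ} (hZ : Monotone Z) {a b : ℝ} (s : Finset ℕ)
    (hs : ∀ j ∈ s, a ≤ Z j ∧ Z (j + 1) ≤ b) :
    ∑ j ∈ s, (Z (j + 1) - Z j) ^ 2 ≤ (b - a) ^ 2 := by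
  rcases s.eq_empty_or_nonempty with rfl | hne
  · simpa using sq_nonneg (b - a)
  have hgap : ∀ j, 0 ≤ Z (j + 1) - Z j := fun j => sub_nonneg.2 (hZ j.le_succ)
  have hsum : ∑ j ∈ s, (Z (j + 1) - Z j) ≤ b - a := calc
    _ ≤ ∑ j ∈ Ico (s.min' hne) (s.max' hne + 1), (Z (j + 1) - Z j) :=
        sum_le_sum_of_subset_of_nonneg
          (fun j hj => mem_Ico.2 ⟨s.min'_le j hj, Nat.lt_succ_of_le (s.le_max' j hj)⟩)
          (fun j _ _ => hgap j)
    _ = Z (s.max' hne + 1) - Z (s.min' hne) :=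
        sum_Ico_sub Z ((s.min'_le_max' hne).trans (Nat.le_succ _))
    _ ≤ b - a := sub_le_sub (hs _ (s.max'_mem hne)).2 (hs _ (s.min'_mem hne)).1
  calc _ ≤ (∑ j ∈ s, (Z (j + 1) - Z j)) ^ 2 := sum_sq_le_sq_sum_of_nonneg fun j _ => hgap j
    _ ≤ (b - a) ^ 2 := pow_le_pow_left₀ (sum_nonneg fun j _ => hgap j) hsum 2

noncomputable def gapSqWithin (Z : ℕ → ℝ) (j : ℕ) (p q : ℝ) : ℝ :=
  if min p q ≤ Z j ∧ Z (j + 1) ≤ max p q then (Z (j + 1) - Z j) ^ 2 else 0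

lemma gapSqWithin_nonneg (Z : ℕ → ℝ) (j : ℕ) (p q : ℝ) : 0 ≤ gapSqWithin Z j p q := by
  unfold gapSqWithin
  split_ifs <;> positivity

lemma sum_gapSqWithin_le {Z : ℕ → ℝ} (hZ : Monotone Z) (n : ℕ) (p q : ℝ) :
    ∑ j ∈ range n, gapSqWithin Z j p q ≤ (p - q) ^ 2 := by
  simp only [gapSqWithin]
  rw [← sum_filter]
  calc _ ≤ (max p q - min p q) ^ 2 := sum_sq_gaps_le_sq hZ _ fun j hj => (mem_filter.1 hj).2
    _ = (p - q) ^ 2 := by rw [max_sub_min_eq_abs', sq_abs]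

def insertAt (u : ℕ → ℝ) (p : ℕ) (c : ℝ) (j : ℕ) : ℝ :=
  if j ≤ p then u j else if j = p + 1 then c else u (j - 1)

lemma monotone_insertAt {u : ℕ → ℝ} (hu : Monotone u) {p : ℕ} {c : ℝ} (h₁ : u p ≤ c)
    (h₂ : c ≤ u (p + 1)) : Monotone (insertAt u p c) := by
  refine monotone_nat_of_le_succ fun j => ?_
  unfold insertAt
  rcases lt_trichotomy j p with h | rfl | h
  · rw [if_pos h.le, if_pos (show j + 1 ≤ p from h)]
    exact hu j.le_succ
  · simpa using h₁
  · rcases Nat.lt_or_ge (p + 1) j with h' | h'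
    · rw [if_neg (by omega), if_neg (by omega), if_neg (by omega), if_neg (by omega)]
      exact hu (by omega)
    · obtain rfl : j = p + 1 := by omega
      simpa using h₂

lemma sum_sq_gaps_insertAt (u : ℕ → ℝ) {p m : ℕ} (hp : p < m) (c : ℝ) :
    ∑ j ∈ range (m + 1), (insertAt u p c (j + 1) - insertAt u p c j) ^ 2
      = ∑ i ∈ (range m).erase p, (u (i + 1) - u i) ^ 2 + (c - u p) ^ 2
        + (u (p + 1) - c) ^ 2 := by
  set f := fun j => (insertAt u p c (j + 1) - insertAt u p c j) ^ 2
  set g := fun i => (u (i + 1) - u i) ^ 2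
  have hlow : ∑ j ∈ range p, f j = ∑ i ∈ range p, g i :=
    sum_congr rfl fun j hj => by
      have := mem_range.1 hj
      simp only [f, g, insertAt, if_pos (show j + 1 ≤ p from this), if_pos this.le]
  have hhigh : ∑ j ∈ Ico (p + 2) (m + 1), f j = ∑ i ∈ Ico (p + 1) m, g i := by
    rw [← sum_Ico_add' f (p + 1) m 1]
    refine sum_congr rfl fun i hi => ?_
    have := (mem_Ico.1 hi).1
    simp only [f, g, insertAt, if_neg (show ¬ i + 1 + 1 ≤ p by omega),
      if_neg (show ¬ i + 1 ≤ p by omega), if_neg (show i + 1 + 1 ≠ p + 1 by omega),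
      if_neg (show i + 1 ≠ p + 1 by omega), Nat.add_sub_cancel]
  have hp1 : f p = (c - u p) ^ 2 := by simp [f, insertAt]
  have hp2 : f (p + 1) = (u (p + 1) - c) ^ 2 := by simp [f, insertAt]
  rw [← sum_range_add_sum_Ico f (show p + 2 ≤ m + 1 by omega), sum_range_succ, sum_range_succ,
    hlow, hhigh, hp1, hp2, sum_erase_eq_sub (mem_range.2 hp),
    ← sum_range_add_sum_Ico g (show p + 1 ≤ m by omega), sum_range_succ]
  ring

lemma val_eq_add_one_of_max_below_of_min_above {n : ℕ} {v : Fin n → ℝ} (hv : Monotone v)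
    {μ : ℝ} (hne : ∀ i, v i ≠ μ) {pm pp : Fin n} (hpm : v pm < μ ∧ ∀ i, v i < μ → i ≤ pm)
    (hpp : μ < v pp ∧ ∀ i, μ < v i → pp ≤ i) : (pp : ℕ) = pm + 1 := by
  have hlt : pm < pp := lt_of_not_ge fun h => (hpp.1.trans_le (hv h)).not_gt hpm.1
  have hsucc : (pm : ℕ) + 1 < n := by have := pp.isLt; omega
  have habove : μ < v ⟨pm + 1, hsucc⟩ := (hne _).lt_or_gt.resolve_left fun h => by
    simpa [Fin.le_def] using hpm.2 _ h
  have hle : (pp : ℕ) ≤ pm + 1 := hpp.2 _ habove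
  have hlt' : (pm : ℕ) < pp := hlt
  omega

section Extension

variable {n : ℕ} [NeZero n]

def extendByLast (v : Fin n → ℝ) (j : ℕ) : ℝ :=
  v ⟨min j (n - 1), by have := Nat.pos_of_neZero n; omega⟩

lemma extendByLast_val (v : Fin n → ℝ) (i : Fin n) : extendByLast v i = v i :=
  congrArg v (Fin.ext (min_eq_left (by have := i.isLt; omega)))

lemma monotone_extendByLast {v : Fin n → ℝ} (hv : Monotone v) : Monotone (extendByLast v) :=
  fun _ _ hab => hv (Fin.mk_le_mk.2 (min_le_min_right _ hab))

lemma sum_filter_succ_ne_eq_sum_erase (v : Fin n → ℝ) (p : Fin n) :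
    ∑ i ∈ univ.filter (fun i : Fin n => (i : ℕ) + 1 < n ∧ i ≠ p), (v i - v (i + 1)) ^ 2
      = ∑ i ∈ (range (n - 1)).erase p, (extendByLast v (i + 1) - extendByLast v i) ^ 2 := by
  have himage : (univ.filter (fun i : Fin n => (i : ℕ) + 1 < n ∧ i ≠ p)).image Fin.val
      = (range (n - 1)).erase p := by
    ext j
    simp only [mem_image, mem_filter, mem_univ, true_and, mem_erase, mem_range]
    constructor
    · rintro ⟨i, ⟨hi, hip⟩, rfl⟩
      exact ⟨fun h => hip (Fin.ext h), by omega⟩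
    · rintro ⟨hjp, hj⟩
      exact ⟨⟨j, by omega⟩, ⟨by simp only; omega, fun h => hjp (by rw [← h])⟩, rfl⟩
  rw [← himage, sum_image Fin.val_injective.injOn]
  refine sum_congr rfl fun i hi => ?_
  rw [← Fin.val_add_one_of_lt' (mem_filter.1 hi).2.1, extendByLast_val, extendByLast_val]
  ring

lemma sum_sq_gaps_insertAt_extendByLast (v : Fin n → ℝ) (μ : ℝ) {pm pp : Fin n}
    (h : (pp : ℕ) = pm + 1) :
    (v pm - μ) ^ 2 + (v pp - μ) ^ 2
        + ∑ i ∈ univ.filter (fun i : Fin n => (i : ℕ) + 1 < n ∧ i ≠ pm), (v i - v (i + 1)) ^ 2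
      = ∑ j ∈ range n, (insertAt (extendByLast v) pm μ (j + 1)
          - insertAt (extendByLast v) pm μ j) ^ 2 := by
  have hsplit := sum_sq_gaps_insertAt (extendByLast v) (p := pm) (m := n - 1)
    (by have := pp.isLt; omega) μ
  rw [Nat.sub_add_cancel (Nat.pos_of_neZero n)] at hsplit
  rw [hsplit, sum_filter_succ_ne_eq_sum_erase, extendByLast_val, ← h, extendByLast_val]
  ring

end Extension

section Graph

variable {V : Type*} [Fintype V] (H : SimpleGraph V) [DecidableRel H.Adj] (S : Finset V)

noncomputable def disagreement (e : V → V → ℝ) (f : V → ℝ) : ℝ :=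
  (1 / 2) * ∑ k, ∑ l, (if H.Adj k l then e k l else 0) + ∑ k ∈ S, f k

lemma sum_inv_max_degree_le_one (i : V) :
    ∑ j ∈ H.neighborFinset i, ((max (H.degree i) (H.degree j) : ℕ) : ℝ)⁻¹ ≤ 1 := by
  calc _ ≤ ∑ _j ∈ H.neighborFinset i, ((H.degree i : ℕ) : ℝ)⁻¹ :=
        sum_le_sum fun j hj => inv_anti₀
          (Nat.cast_pos.2 (H.degree_pos_iff_exists_adj i |>.2 ⟨j, (H.mem_neighborFinset i j).1 hj⟩))
          (Nat.cast_le.2 (le_max_left _ _))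
    _ ≤ 1 := by
        rw [sum_const, nsmul_eq_mul, SimpleGraph.card_neighborFinset_eq_degree]
        exact mul_inv_le_one

variable {H S}

lemma disagreement_mono {e e' : V → V → ℝ} {f f' : V → ℝ}
    (he : ∀ k l, H.Adj k l → e k l ≤ e' k l) (hf : ∀ k ∈ S, f k ≤ f' k) :
    disagreement H S e f ≤ disagreement H S e' f' := by
  unfold disagreement
  gcongr with k _ l _ k hk
  · split_ifs with h
    exacts [he k l h, le_rfl]
  · exact hf k hk

lemma disagreement_nonneg {e : V → V → ℝ} {f : V → ℝ} (he : ∀ k l, 0 ≤ e k l)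
    (hf : ∀ k, 0 ≤ f k) : 0 ≤ disagreement H S e f := by
  unfold disagreement
  have hE := sum_nonneg fun k (_ : k ∈ univ) => sum_nonneg fun l (_ : l ∈ univ) =>
    ite_nonneg (he k l) (le_refl (0 : ℝ)) (p := H.Adj k l)
  exact add_nonneg (mul_nonneg (by norm_num) hE) (sum_nonneg fun k _ => hf k)

lemma le_disagreement_of_adj {e : V → V → ℝ} {f : V → ℝ} (he : ∀ k l, 0 ≤ e k l)
    (hf : ∀ k, 0 ≤ f k) {k l : V} (hkl : H.Adj k l) :
    (e k l + e l k) / 2 ≤ disagreement H S e f := by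
  have hne : (k, l) ≠ (l, k) := fun h => hkl.ne (Prod.ext_iff.1 h).1
  have hsum : e k l + e l k ≤ ∑ k, ∑ l, (if H.Adj k l then e k l else 0) := by
    have := add_le_sum (f := fun p : V × V => if H.Adj p.1 p.2 then e p.1 p.2 else 0)
      (fun p _ => ite_nonneg (he _ _) le_rfl) (mem_univ (k, l)) (mem_univ (l, k)) hne
    rwa [if_pos hkl, if_pos hkl.symm, ← univ_product_univ, sum_product] at this
  have := sum_nonneg fun k (_ : k ∈ S) => hf k
  unfold disagreement
  linarith

lemma le_disagreement_of_mem {e : V → V → ℝ} {f : V → ℝ} (he : ∀ k l, 0 ≤ e k l)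
    (hf : ∀ k, 0 ≤ f k) {k : V} (hk : k ∈ S) : f k ≤ disagreement H S e f := by
  have h₁ : f k ≤ ∑ k ∈ S, f k := single_le_sum (fun k _ => hf k) hk
  have h₂ := sum_nonneg fun k (_ : k ∈ univ) => sum_nonneg fun l (_ : l ∈ univ) =>
    ite_nonneg (he k l) (le_refl (0 : ℝ)) (p := H.Adj k l)
  unfold disagreement
  linarith

lemma sum_disagreement {ι : Type*} (s : Finset ι) (e : ι → V → V → ℝ) (f : ι → V → ℝ) :
    ∑ j ∈ s, disagreement H S (e j) (f j)
      = disagreement H S (fun k l => ∑ j ∈ s, e j k l) (fun k => ∑ j ∈ s, f j k) := by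
  simp only [disagreement, sum_add_distrib, ← mul_sum]
  rw [sum_comm (s := s) (t := S)]
  congr 2
  rw [sum_comm]
  refine sum_congr rfl fun k _ => ?_
  rw [sum_comm]
  refine sum_congr rfl fun l _ => ?_
  split_ifs <;> simp

end Graph

section Step

variable {V : Type*} [Fintype V] [DecidableEq V] (H : SimpleGraph V) [DecidableRel H.Adj]
  (S : Finset V) (μ δ : ℝ)

noncomputable def consensusStep (y : V → ℝ) (i : V) : ℝ :=
  y i + (δ / 4) * ∑ j ∈ H.neighborFinset i,
      ((max (H.degree i) (H.degree j) : ℕ) : ℝ)⁻¹ * (y j - y i)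
    + if i ∈ S then (δ / 4) * (μ - y i) else 0

noncomputable def noisyStep (y : V → ℝ) (we : V → V → ℝ) (wm : V → ℝ) (i : V) : ℝ :=
  y i + (δ / 4) * ∑ j ∈ H.neighborFinset i,
      ((max (H.degree i) (H.degree j) : ℕ) : ℝ)⁻¹ * (y j - y i + we i j)
    + if i ∈ S then (δ / 4) * (μ + wm i - y i) else 0

variable {H S μ δ}

lemma consensusStep_le {y : V → ℝ} {i : V} {c : ℝ} (hδ₀ : 0 ≤ δ) (hδ₂ : δ ≤ 2) (hi : y i ≤ c)
    (hN : ∀ j, H.Adj i j → y j ≤ c) (hμ : i ∈ S → μ ≤ c) : consensusStep H S μ δ y i ≤ c := by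
  set s := ∑ j ∈ H.neighborFinset i, ((max (H.degree i) (H.degree j) : ℕ) : ℝ)⁻¹
  have hs₀ : 0 ≤ s := sum_nonneg fun _ _ => by positivity
  have hs₁ : s ≤ 1 := sum_inv_max_degree_le_one H i
  have hpull : ∑ j ∈ H.neighborFinset i, ((max (H.degree i) (H.degree j) : ℕ) : ℝ)⁻¹ * (y j - y i)
      ≤ s * (c - y i) := by
    rw [sum_mul]
    exact sum_le_sum fun j hj => mul_le_mul_of_nonneg_left
      (by linarith [hN j ((H.mem_neighborFinset i j).1 hj)]) (by positivity)
  have hpull' := mul_le_mul_of_nonneg_left hpull (by linarith : 0 ≤ δ / 4)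
  -- `δ ≤ 2` keeps the weight of `y i` nonnegative: the new value is a convex combination of
  -- `y i`, the neighbours' values and `μ`
  have hconv : 0 ≤ (c - y i) * (1 - δ / 4 * (s + 1)) := mul_nonneg (by linarith) (by nlinarith)
  unfold consensusStep
  split_ifs with hS
  · nlinarith [hμ hS]
  · nlinarith

lemma consensusStep_neg (y : V → ℝ) (i : V) :
    consensusStep H S (-μ) δ (-y) i = -consensusStep H S μ δ y i := by
  have hsum : ∑ j ∈ H.neighborFinset i,
      ((max (H.degree i) (H.degree j) : ℕ) : ℝ)⁻¹ * ((-y) j - (-y) i)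
      = -∑ j ∈ H.neighborFinset i, ((max (H.degree i) (H.degree j) : ℕ) : ℝ)⁻¹ * (y j - y i) := by
    rw [← sum_neg_distrib]
    exact sum_congr rfl fun j _ => by simp only [Pi.neg_apply]; ring
  unfold consensusStep
  rw [hsum]
  split_ifs <;> simp only [Pi.neg_apply] <;> ring

lemma le_consensusStep {y : V → ℝ} {i : V} {c : ℝ} (hδ₀ : 0 ≤ δ) (hδ₂ : δ ≤ 2) (hi : c ≤ y i)
    (hN : ∀ j, H.Adj i j → c ≤ y j) (hμ : i ∈ S → c ≤ μ) : c ≤ consensusStep H S μ δ y i := by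
  have := consensusStep_le (μ := -μ) (y := -y) (c := -c) hδ₀ hδ₂ (neg_le_neg hi)
    (fun j hj => neg_le_neg (hN j hj)) (fun hS => neg_le_neg (hμ hS))
  rw [consensusStep_neg] at this
  linarith

end Step

section Crossing

variable {V : Type*} [Fintype V] [DecidableEq V]

def CrossesGap (H : SimpleGraph V) (S : Finset V) (μ a b : ℝ) (y : V → ℝ) : Prop :=
  (∃ k l, H.Adj k l ∧ y k ≤ a ∧ b ≤ y l) ∨ ∃ k ∈ S, min (y k) μ ≤ a ∧ b ≤ max (y k) μ

lemma consensusStep_preserves_split {H : SimpleGraph V} [DecidableRel H.Adj] {S : Finset V}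
    {μ δ a b : ℝ} {y : V → ℝ} (hδ₀ : 0 ≤ δ) (hδ₂ : δ ≤ 2) (hy : ∀ i, y i ≤ a ∨ b ≤ y i)
    (hμ : μ ≤ a ∨ b ≤ μ) (hcross : ¬ CrossesGap H S μ a b y) (i : V) :
    (y i ≤ a → consensusStep H S μ δ y i ≤ a) ∧ (b ≤ y i → b ≤ consensusStep H S μ δ y i) := by
  simp only [CrossesGap, not_or, not_exists, not_and] at hcross
  obtain ⟨hE, hS⟩ := hcross
  refine ⟨fun hi => consensusStep_le hδ₀ hδ₂ hi ?_ ?_, fun hi => le_consensusStep hδ₀ hδ₂ hi ?_ ?_⟩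
  · exact fun j hj => (hy j).resolve_right (hE i j hj hi)
  · exact fun hiS => hμ.resolve_right fun hb =>
      hS i hiS (min_le_of_left_le hi) (le_max_of_le_right hb)
  · exact fun j hj => (hy j).resolve_left fun ha => hE j i hj.symm ha hi
  · exact fun hiS => hμ.resolve_left fun ha =>
      hS i hiS (min_le_of_right_le ha) (le_max_of_le_left hi)

lemma exists_crossesGap (G : ℕ → SimpleGraph V) [∀ t, DecidableRel (G t).Adj]
    (S : ℕ → Finset V) (μ : ℝ) {t₀ t₁ : ℕ} {Δ : ℕ → ℝ} {x : ℕ → V → ℝ}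
    (hΔ : ∀ m ∈ Ico t₀ t₁, 0 ≤ Δ m ∧ Δ m ≤ 2)
    (hx : ∀ m ∈ Ico t₀ t₁, x (m + 1) = consensusStep (G m) (S m) μ (Δ m) (x m))
    (hconn : (⨆ m ∈ Ico t₀ t₁, G m).Connected) {a b : ℝ} (hab : a < b)
    (hsplit : ∀ i, x t₀ i ≤ a ∨ b ≤ x t₀ i) (hμ : μ ≤ a ∨ b ≤ μ)
    (hlo : ∃ i, x t₀ i ≤ a) (hhi : ∃ i, b ≤ x t₀ i) :
    ∃ m ∈ Ico t₀ t₁, CrossesGap (G m) (S m) μ a b (x m) := by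
  by_contra! hno
  -- without a crossing, the agents at or below `a` stay there, and so do those at or above `b`
  have hinv : ∀ m, t₀ ≤ m → m ≤ t₁ → ∀ i,
      (x t₀ i ≤ a → x m i ≤ a) ∧ (b ≤ x t₀ i → b ≤ x m i) := by
    intro m hm
    induction m, hm using Nat.le_induction with
    | base => exact fun _ i => ⟨id, id⟩
    | succ m hm ih =>
      intro hm₁ i
      have hmem : m ∈ Ico t₀ t₁ := mem_Ico.2 ⟨hm, hm₁⟩
      have ih := ih (Nat.le_of_succ_le hm₁)
      have hstep := consensusStep_preserves_split (hΔ m hmem).1 (hΔ m hmem).2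
        (fun j => (hsplit j).imp (ih j).1 (ih j).2) hμ (hno m hmem) i
      rw [hx m hmem]
      exact ⟨fun h => hstep.1 ((ih i).1 h), fun h => hstep.2 ((ih i).2 h)⟩
  obtain ⟨i₀, hi₀⟩ := hlo
  obtain ⟨j₀, hj₀⟩ := hhi
  obtain ⟨p⟩ := hconn.preconnected i₀ j₀
  obtain ⟨d, -, hd₁, hd₂⟩ := p.exists_boundary_dart {i | x t₀ i ≤ a} hi₀
    (by simpa using hab.trans_le hj₀)
  obtain ⟨m, hm, hadj⟩ : ∃ m ∈ Ico t₀ t₁, (G m).Adj d.fst d.snd := by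
    simpa [SimpleGraph.iSup_adj] using d.adj
  have hm' := mem_Ico.1 hm
  exact hno m hm <| Or.inl ⟨d.fst, d.snd, hadj, (hinv m hm'.1 hm'.2.le _).1 hd₁,
    (hinv m hm'.1 hm'.2.le _).2 ((hsplit _).resolve_left hd₂)⟩

end Crossing

section Gaps

variable {V : Type*} [Fintype V] [DecidableEq V] (G : ℕ → SimpleGraph V)
  [∀ t, DecidableRel (G t).Adj] (S : ℕ → Finset V) (μ : ℝ) {t₀ t₁ : ℕ} {Δ : ℕ → ℝ}
  {x : ℕ → V → ℝ} {Z : ℕ → ℝ} {n : ℕ}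

lemma sq_gap_le_sum_disagreement (hΔ : ∀ m ∈ Ico t₀ t₁, 0 ≤ Δ m ∧ Δ m ≤ 2)
    (hx : ∀ m ∈ Ico t₀ t₁, x (m + 1) = consensusStep (G m) (S m) μ (Δ m) (x m))
    (hconn : (⨆ m ∈ Ico t₀ t₁, G m).Connected) (hZ : Monotone Z)
    (hlevel : ∀ i, ∃ e, Z e = x t₀ i) (hμ : ∃ e, Z e = μ)
    (hfirst : ∃ i, x t₀ i = Z 0) (hlast : ∃ i, x t₀ i = Z n) {j : ℕ} (hj : j < n) :
    (Z (j + 1) - Z j) ^ 2 ≤ ∑ m ∈ Ico t₀ t₁, disagreement (G m) (S m)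
      (fun k l => gapSqWithin Z j (x m k) (x m l)) (fun k => gapSqWithin Z j (x m k) μ) := by
  have hnonneg : ∀ m, 0 ≤ disagreement (G m) (S m)
      (fun k l => gapSqWithin Z j (x m k) (x m l)) (fun k => gapSqWithin Z j (x m k) μ) :=
    fun m => disagreement_nonneg (fun _ _ => gapSqWithin_nonneg ..) fun _ => gapSqWithin_nonneg ..
  rcases (hZ j.le_succ).eq_or_lt with heq | hlt
  · rw [heq, sub_self, sq, mul_zero]
    exact sum_nonneg fun m _ => hnonneg m
  have hside : ∀ e, Z e ≤ Z j ∨ Z (j + 1) ≤ Z e := fun e =>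
    (le_or_gt e j).imp (fun h => hZ h) fun h => hZ h
  obtain ⟨m, hm, hcross⟩ := exists_crossesGap G S μ hΔ hx hconn hlt
    (fun i => by obtain ⟨e, he⟩ := hlevel i; exact he ▸ hside e)
    (by obtain ⟨e, he⟩ := hμ; exact he ▸ hside e)
    (by obtain ⟨i, hi⟩ := hfirst; exact ⟨i, hi ▸ hZ (Nat.zero_le j)⟩)
    (by obtain ⟨i, hi⟩ := hlast; exact ⟨i, hi ▸ hZ hj⟩)
  refine le_trans ?_ (single_le_sum (fun m _ => hnonneg m) hm)
  rcases hcross with ⟨k, l, hkl, hk, hl⟩ | ⟨k, hk, hlo, hhi⟩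
  · refine le_trans (le_of_eq ?_) (le_disagreement_of_adj (fun _ _ => gapSqWithin_nonneg ..)
      (fun _ => gapSqWithin_nonneg ..) hkl)
    have hkl' : x m k ≤ x m l := hk.trans (hlt.le.trans hl)
    simp only [gapSqWithin, min_eq_left hkl', max_eq_right hkl', min_eq_right hkl',
      max_eq_left hkl', hk, hl, and_self, if_true]
    ring
  · refine le_trans (le_of_eq ?_) (le_disagreement_of_mem (fun _ _ => gapSqWithin_nonneg ..)
      (fun _ => gapSqWithin_nonneg ..) hk)
    simp only [gapSqWithin, hlo, hhi, and_self, if_true]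

theorem sum_sq_gaps_le_sum_disagreement (hΔ : ∀ m ∈ Ico t₀ t₁, 0 ≤ Δ m ∧ Δ m ≤ 2)
    (hx : ∀ m ∈ Ico t₀ t₁, x (m + 1) = consensusStep (G m) (S m) μ (Δ m) (x m))
    (hconn : (⨆ m ∈ Ico t₀ t₁, G m).Connected) (hZ : Monotone Z)
    (hlevel : ∀ i, ∃ e, Z e = x t₀ i) (hμ : ∃ e, Z e = μ)
    (hfirst : ∃ i, x t₀ i = Z 0) (hlast : ∃ i, x t₀ i = Z n) :
    ∑ j ∈ range n, (Z (j + 1) - Z j) ^ 2 ≤ ∑ m ∈ Ico t₀ t₁, disagreement (G m) (S m)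
      (fun k l => (x m k - x m l) ^ 2) (fun k => (x m k - μ) ^ 2) :=
  calc _ ≤ ∑ j ∈ range n, ∑ m ∈ Ico t₀ t₁, disagreement (G m) (S m)
          (fun k l => gapSqWithin Z j (x m k) (x m l)) (fun k => gapSqWithin Z j (x m k) μ) :=
        sum_le_sum fun j hj => sq_gap_le_sum_disagreement G S μ hΔ hx hconn hZ hlevel hμ
          hfirst hlast (mem_range.1 hj)
    _ = ∑ m ∈ Ico t₀ t₁, disagreement (G m) (S m)
          (fun k l => ∑ j ∈ range n, gapSqWithin Z j (x m k) (x m l))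
          (fun k => ∑ j ∈ range n, gapSqWithin Z j (x m k) μ) := by
        rw [sum_comm]
        exact sum_congr rfl fun m _ => sum_disagreement _ _ _
    _ ≤ _ := sum_le_sum fun m _ => disagreement_mono
          (fun k l _ => sum_gapSqWithin_le hZ n _ _) fun k _ => sum_gapSqWithin_le hZ n _ _

end Gaps

section Noisy

variable {Ω : Type*} [MeasurableSpace Ω] {P : Measure Ω} {V : Type*} [Fintype V] [DecidableEq V]
  {H : SimpleGraph V} [DecidableRel H.Adj] {S : Finset V} {μ δ : ℝ}
  {Y : V → Ω → ℝ} {We : V → V → Ω → ℝ} {Wm : V → Ω → ℝ} {i : V}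

lemma memLp_noisyStep [IsFiniteMeasure P] (hY : ∀ j, MemLp (Y j) 2 P)
    (hWe : ∀ j, H.Adj i j → MemLp (We i j) 2 P) (hWm : i ∈ S → MemLp (Wm i) 2 P) :
    MemLp (fun ω => noisyStep H S μ δ (fun j => Y j ω) (fun k j => We k j ω) (fun k => Wm k ω) i)
      2 P := by
  have hsum := memLp_finsetSum (H.neighborFinset i) fun j hj =>
    (((hY j).sub (hY i)).add (hWe j ((H.mem_neighborFinset i j).1 hj))).const_mul
      ((max (H.degree i) (H.degree j) : ℕ) : ℝ)⁻¹
  refine ((hY i).add (hsum.const_mul (δ / 4))).add ?_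
  by_cases hS : i ∈ S
  · simp only [hS, if_true]
    exact (((memLp_const μ).add (hWm hS)).sub (hY i)).const_mul (δ / 4)
  · simp only [hS, if_false]
    exact memLp_const 0

lemma integral_noisyStep [IsProbabilityMeasure P] (hY : ∀ j, Integrable (Y j) P)
    (hWe : ∀ j, H.Adj i j → Integrable (We i j) P ∧ ∫ ω, We i j ω ∂P = 0)
    (hWm : i ∈ S → Integrable (Wm i) P ∧ ∫ ω, Wm i ω ∂P = 0) :
    ∫ ω, noisyStep H S μ δ (fun j => Y j ω) (fun k j => We k j ω) (fun k => Wm k ω) i ∂P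
      = consensusStep H S μ δ (fun j => ∫ ω, Y j ω ∂P) i := by
  unfold noisyStep consensusStep
  beta_reduce
  set w : V → ℝ := fun j => ((max (H.degree i) (H.degree j) : ℕ) : ℝ)⁻¹
  have hterm : ∀ j ∈ H.neighborFinset i,
      Integrable (fun ω => w j * (Y j ω - Y i ω + We i j ω)) P := fun j hj =>
    (((hY j).sub (hY i)).add (hWe j ((H.mem_neighborFinset i j).1 hj)).1).const_mul _
  have hedge : Integrable (fun ω => Y i ω + δ / 4 * ∑ j ∈ H.neighborFinset i,
      w j * (Y j ω - Y i ω + We i j ω)) P :=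
    (hY i).add ((integrable_finsetSum _ hterm).const_mul _)
  have hmeas : Integrable (fun ω => if i ∈ S then δ / 4 * (μ + Wm i ω - Y i ω) else 0) P := by
    by_cases hS : i ∈ S
    · simp only [hS, if_true]
      exact (((integrable_const μ).add (hWm hS).1).sub (hY i)).const_mul (δ / 4)
    · simp only [hS, if_false, integrable_const]
  rw [integral_add hedge hmeas, integral_add (hY i) ((integrable_finsetSum _ hterm).const_mul _),
    integral_const_mul, integral_finsetSum _ hterm]
  congr 3
  · refine sum_congr rfl fun j hj => ?_
    obtain ⟨hWeInt, hWeMean⟩ := hWe j ((H.mem_neighborFinset i j).1 hj)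
    rw [integral_const_mul, integral_add (f := fun ω => Y j ω - Y i ω) ((hY j).sub (hY i)) hWeInt,
      integral_sub (hY j) (hY i), hWeMean, add_zero]
  · by_cases hS : i ∈ S
    · obtain ⟨hWmInt, hWmMean⟩ := hWm hS
      simp only [hS, if_true]
      rw [integral_const_mul,
        integral_sub (f := fun ω => μ + Wm i ω) ((integrable_const μ).add hWmInt) (hY i),
        integral_add (integrable_const μ) hWmInt, hWmMean, integral_const]
      simp
    · simp only [hS, if_false, integral_zero]

lemma sq_integral_sub_le [IsProbabilityMeasure P] {X X' : Ω → ℝ} (hX : MemLp X 2 P)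
    (hX' : MemLp X' 2 P) :
    (∫ ω, X ω ∂P - ∫ ω, X' ω ∂P) ^ 2 ≤ ∫ ω, (X ω - X' ω) ^ 2 ∂P := by
  have hvar := variance_nonneg (fun ω => X ω - X' ω) P
  rw [variance_eq_sub (X := fun ω => X ω - X' ω) (hX.sub hX')] at hvar
  simp only [Pi.pow_apply] at hvar
  rw [integral_sub (hX.integrable one_le_two) (hX'.integrable one_le_two)] at hvar
  linarith

end Noisy

theorem sum_sq_gaps_insertAt_le_sum_disagreement {n : ℕ} [NeZero n]
    (G : ℕ → SimpleGraph (Fin n)) [∀ t, DecidableRel (G t).Adj] (S : ℕ → Finset (Fin n))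
    (μ : ℝ) {t₀ t₁ : ℕ} {Δ : ℕ → ℝ} {x : ℕ → Fin n → ℝ}
    (hΔ : ∀ m ∈ Ico t₀ t₁, 0 ≤ Δ m ∧ Δ m ≤ 2)
    (hx : ∀ m ∈ Ico t₀ t₁, x (m + 1) = consensusStep (G m) (S m) μ (Δ m) (x m))
    (hconn : (⨆ m ∈ Ico t₀ t₁, G m).Connected) {v0 : Fin n → ℝ} (hv0 : Monotone v0)
    (hx₀ : ∀ i, x t₀ i = v0 i) {p q : Fin n} (hpq : (q : ℕ) = p + 1) (hp : v0 p ≤ μ)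
    (hq : μ ≤ v0 q) :
    ∑ j ∈ range n, (insertAt (extendByLast v0) p μ (j + 1) - insertAt (extendByLast v0) p μ j) ^ 2
      ≤ ∑ m ∈ Ico t₀ t₁, disagreement (G m) (S m)
          (fun k l => (x m k - x m l) ^ 2) (fun k => (x m k - μ) ^ 2) := by
  have hn := q.isLt
  refine sum_sq_gaps_le_sum_disagreement G S μ hΔ hx hconn
    (monotone_insertAt (monotone_extendByLast hv0) ?_ ?_) (fun i => ?_) ⟨p + 1, by simp [insertAt]⟩
    ⟨⟨0, by omega⟩, ?_⟩ ⟨⟨n - 1, by omega⟩, ?_⟩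
  · rwa [extendByLast_val]
  · rwa [← hpq, extendByLast_val]
  · rcases le_or_gt (i : ℕ) p with h | h
    · exact ⟨i, by rw [hx₀, insertAt, if_pos h, extendByLast_val]⟩
    · refine ⟨i + 1, ?_⟩
      rw [hx₀, insertAt, if_neg (by omega), if_neg (by omega), Nat.add_sub_cancel,
        extendByLast_val]
  · rw [hx₀, insertAt, if_pos (Nat.zero_le _)]
    exact (extendByLast_val v0 _).symm
  · rw [hx₀, insertAt, if_neg (by omega), if_neg (by omega)]
    exact (extendByLast_val v0 _).symm

section Protocol

variable {Ω : Type*} [MeasurableSpace Ω] {P : Measure Ω} {V : Type*} [Fintype V] [DecidableEq V]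
  {G : ℕ → SimpleGraph V} [∀ t, DecidableRel (G t).Adj] {S : ℕ → Finset V} {μ : ℝ}
  {Δ : ℕ → ℝ} {t₀ : ℕ} {v : ℕ → V → Ω → ℝ} {we : ℕ → V → V → Ω → ℝ} {wm : ℕ → V → Ω → ℝ}

lemma memLp_of_noisyStep_dynamics [IsFiniteMeasure P]
    (hwe : ∀ t i j, t₀ ≤ t → (G t).Adj i j → MemLp (we t i j) 2 P)
    (hwm : ∀ t i, t₀ ≤ t → i ∈ S t → MemLp (wm t i) 2 P) (hv₀ : ∀ i, MemLp (v t₀ i) 2 P)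
    (hv : ∀ t, t₀ ≤ t → ∀ i ω, v (t + 1) i ω = noisyStep (G t) (S t) μ (Δ t)
      (fun j => v t j ω) (fun k j => we t k j ω) (fun k => wm t k ω) i) :
    ∀ t, t₀ ≤ t → ∀ i, MemLp (v t i) 2 P := by
  intro t ht
  induction t, ht using Nat.le_induction with
  | base => exact hv₀
  | succ t ht ih =>
    intro i
    rw [show v (t + 1) i = _ from funext (hv t ht i)]
    exact memLp_noisyStep ih (fun j hj => hwe t i j ht hj) (hwm t i ht)

lemma integral_of_noisyStep_dynamics [IsProbabilityMeasure P]
    (hwe : ∀ t i j, t₀ ≤ t → (G t).Adj i j → Integrable (we t i j) P ∧ ∫ ω, we t i j ω ∂P = 0)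
    (hwm : ∀ t i, t₀ ≤ t → i ∈ S t → Integrable (wm t i) P ∧ ∫ ω, wm t i ω ∂P = 0)
    (hvint : ∀ t, t₀ ≤ t → ∀ i, Integrable (v t i) P)
    (hv : ∀ t, t₀ ≤ t → ∀ i ω, v (t + 1) i ω = noisyStep (G t) (S t) μ (Δ t)
      (fun j => v t j ω) (fun k j => we t k j ω) (fun k => wm t k ω) i) {t : ℕ} (ht : t₀ ≤ t) :
    (fun i => ∫ ω, v (t + 1) i ω ∂P)
      = consensusStep (G t) (S t) μ (Δ t) (fun i => ∫ ω, v t i ω ∂P) := by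
  funext i
  rw [show v (t + 1) i = _ from funext (hv t ht i)]
  exact integral_noisyStep (hvint t ht) (fun j hj => hwe t i j ht hj) (hwm t i ht)

end Protocol

theorem stmt18_general {Ω : Type*} [MeasureSpace Ω] [IsProbabilityMeasure (ℙ : Measure Ω)]
    (n : ℕ) [NeZero n]
    (G : ℕ → SimpleGraph (Fin n)) [∀ t, DecidableRel (G t).Adj]
    (S : ℕ → Finset (Fin n))
    (μ : ℝ)
    (t₀ t₁ : ℕ)
    (we : ℕ → Fin n → Fin n → Ω → ℝ)
    (wm : ℕ → Fin n → Ω → ℝ)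
    (hweMean : ∀ t i j, t₀ ≤ t → (G t).Adj i j → ∫ ω, we t i j ω ∂ℙ = 0)
    (hwmMean : ∀ t i, t₀ ≤ t → i ∈ S t → ∫ ω, wm t i ω ∂ℙ = 0)
    (hweL2 : ∀ t i j, t₀ ≤ t → (G t).Adj i j → MemLp (we t i j) 2 ℙ)
    (hwmL2 : ∀ t i, t₀ ≤ t → i ∈ S t → MemLp (wm t i) 2 ℙ)
    (v : ℕ → Fin n → Ω → ℝ) (v0 : Fin n → ℝ)
    (hInit : ∀ i ω, v t₀ i ω = v0 i)
    (Δ : ℕ → ℝ) (hΔ : ∀ m, t₀ ≤ m → m < t₁ → 0 < Δ m ∧ Δ m < 1)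
    (hDyn : ∀ t, t₀ ≤ t → ∀ i ω,
      v (t + 1) i ω = v t i ω
        + (Δ t / 4) * (∑ j ∈ (G t).neighborFinset i,
            (((max ((G t).degree i) ((G t).degree j) : ℕ) : ℝ))⁻¹
              * (v t j ω - v t i ω + we t i j ω))
        + (if i ∈ S t then (Δ t / 4) * (μ + wm t i ω - v t i ω) else 0))
    (hConn : (⨆ m ∈ Finset.Ico t₀ t₁, G m).Connected)
    (hSorted : StrictMono v0)
    (hNe : ∀ i, v0 i ≠ μ)
    (pm pp : Fin n)
    (hpm : v0 pm < μ ∧ ∀ i, v0 i < μ → i ≤ pm)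
    (hpp : μ < v0 pp ∧ ∀ i, μ < v0 i → pp ≤ i) :
    (v0 pm - μ) ^ 2 + (v0 pp - μ) ^ 2
        + ∑ i ∈ Finset.univ.filter (fun i : Fin n => (i : ℕ) + 1 < n ∧ i ≠ pm),
            (v0 i - v0 (i + 1)) ^ 2
      ≤ ∑ m ∈ Finset.Ico t₀ t₁,
          ((1 / 2) * ∑ k, ∑ l,
              (if (G m).Adj k l then ∫ ω, (v m k ω - v m l ω) ^ 2 ∂ℙ else 0)
            + ∑ k ∈ S m, ∫ ω, (v m k ω - μ) ^ 2 ∂ℙ) := by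
  have hP : (pp : ℕ) = pm + 1 :=
    val_eq_add_one_of_max_below_of_min_above hSorted.monotone hNe hpm hpp
  have hL2 : ∀ t, t₀ ≤ t → ∀ i, MemLp (v t i) 2 ℙ :=
    memLp_of_noisyStep_dynamics hweL2 hwmL2 (fun i => by
      rw [show v t₀ i = fun _ => v0 i from funext (hInit i)]; exact memLp_const _) hDyn
  have hmean₀ : ∀ i, ∫ ω, v t₀ i ω ∂ℙ = v0 i := fun i => by simp [hInit]
  have hmean : ∀ m ∈ Ico t₀ t₁, (fun i => ∫ ω, v (m + 1) i ω ∂ℙ)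
      = consensusStep (G m) (S m) μ (Δ m) (fun i => ∫ ω, v m i ω ∂ℙ) := fun m hm =>
    integral_of_noisyStep_dynamics
      (fun t i j ht hij => ⟨(hweL2 t i j ht hij).integrable one_le_two, hweMean t i j ht hij⟩)
      (fun t i ht hi => ⟨(hwmL2 t i ht hi).integrable one_le_two, hwmMean t i ht hi⟩)
      (fun t ht i => (hL2 t ht i).integrable one_le_two) hDyn (mem_Ico.1 hm).1
  rw [sum_sq_gaps_insertAt_extendByLast v0 μ hP]
  calc _ ≤ ∑ m ∈ Ico t₀ t₁, disagreement (G m) (S m)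
        (fun k l => (∫ ω, v m k ω ∂ℙ - ∫ ω, v m l ω ∂ℙ) ^ 2) (fun k => (∫ ω, v m k ω ∂ℙ - μ) ^ 2) :=
      sum_sq_gaps_insertAt_le_sum_disagreement G S μ
        (fun m hm => have h := hΔ m (mem_Ico.1 hm).1 (mem_Ico.1 hm).2; ⟨h.1.le, by linarith⟩)
        hmean hConn hSorted.monotone hmean₀ hP hpm.1.le hpp.1.le
    _ ≤ _ := sum_le_sum fun m hm => disagreement_mono
        (fun k l _ => sq_integral_sub_le (hL2 m (mem_Ico.1 hm).1 k) (hL2 m (mem_Ico.1 hm).1 l))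
        fun k _ => by simpa using sq_integral_sub_le (hL2 m (mem_Ico.1 hm).1 k) (memLp_const μ)

/-- for the scalar (`l = 1`) cooperative learning protocol started
at time `t₀` from deterministic, strictly sorted initial values `v0` none of
which equals `μ`, with some value below and some above `μ`, if the union of the
graphs over the window `[t₀, t₁)` is connected and at least one measurement
occurs in the window, then
`Σ_{m=t₀}^{t₁-1} [ Σ_{{k,l}∈E(m)} E[(v_k(m)-v_l(m))²] + Σ_{k∈S(m)} E[(v_k(m)-μ)²] ]
 ≥ (v0(p₋)-μ)² + (v0(p₊)-μ)² + Σ_{i≠p₋} (v0(i)-v0(i+1))²`,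
where `p₋` (resp. `p₊`) is the largest (resp. smallest) index with `v0 < μ`
(resp. `v0 > μ`).  (Each unordered edge is counted once: the edge sum is written
as half the sum over ordered adjacent pairs.) -/
theorem stmt18 {Ω : Type*} [MeasureSpace Ω] [IsProbabilityMeasure (ℙ : Measure Ω)]
    (n : ℕ) [NeZero n]
    (G : ℕ → SimpleGraph (Fin n)) [∀ t, DecidableRel (G t).Adj]
    (S : ℕ → Finset (Fin n))
    (μ σ σ' : ℝ)
    (t₀ t₁ : ℕ) (ht : t₀ < t₁)
    (we : ℕ → Fin n → Fin n → Ω → ℝ)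
    (wm : ℕ → Fin n → Ω → ℝ)
    (hweMeas : ∀ t i j, t₀ ≤ t → (G t).Adj i j → Measurable (we t i j))
    (hwmMeas : ∀ t i, t₀ ≤ t → i ∈ S t → Measurable (wm t i))
    (hIndep : iIndepFun
      (Sum.elim
        (fun q : {p : ℕ × Fin n × Fin n // t₀ ≤ p.1 ∧ (G p.1).Adj p.2.1 p.2.2} =>
          we q.1.1 q.1.2.1 q.1.2.2)
        (fun q : {p : ℕ × Fin n // t₀ ≤ p.1 ∧ p.2 ∈ S p.1} => wm q.1.1 q.1.2)) ℙ)
    (hweMean : ∀ t i j, t₀ ≤ t → (G t).Adj i j → ∫ ω, we t i j ω ∂ℙ = 0)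
    (hwmMean : ∀ t i, t₀ ≤ t → i ∈ S t → ∫ ω, wm t i ω ∂ℙ = 0)
    (hweL2 : ∀ t i j, t₀ ≤ t → (G t).Adj i j → MemLp (we t i j) 2 ℙ)
    (hwmL2 : ∀ t i, t₀ ≤ t → i ∈ S t → MemLp (wm t i) 2 ℙ)
    (hweVar : ∀ t i j, t₀ ≤ t → (G t).Adj i j → ∫ ω, (we t i j ω) ^ 2 ∂ℙ = σ' ^ 2)
    (hwmVar : ∀ t i, t₀ ≤ t → i ∈ S t → ∫ ω, (wm t i ω) ^ 2 ∂ℙ = σ ^ 2)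
    (v : ℕ → Fin n → Ω → ℝ) (v0 : Fin n → ℝ)
    (hInit : ∀ i ω, v t₀ i ω = v0 i)
    (Δ : ℕ → ℝ) (hΔ : ∀ m, t₀ ≤ m → m < t₁ → 0 < Δ m ∧ Δ m < 1)
    (hDyn : ∀ t, t₀ ≤ t → ∀ i ω,
      v (t + 1) i ω = v t i ω
        + (Δ t / 4) * (∑ j ∈ (G t).neighborFinset i,
            (((max ((G t).degree i) ((G t).degree j) : ℕ) : ℝ))⁻¹
              * (v t j ω - v t i ω + we t i j ω))
        + (if i ∈ S t then (Δ t / 4) * (μ + wm t i ω - v t i ω) else 0))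
    (hConn : (⨆ m ∈ Finset.Ico t₀ t₁, G m).Connected)
    (hMeas : ∃ m, t₀ ≤ m ∧ m < t₁ ∧ (S m).Nonempty)
    (hSorted : StrictMono v0)
    (hNe : ∀ i, v0 i ≠ μ)
    (hBelow : ∃ i, v0 i < μ) (hAbove : ∃ i, μ < v0 i)
    (pm pp : Fin n)
    (hpm : v0 pm < μ ∧ ∀ i, v0 i < μ → i ≤ pm)
    (hpp : μ < v0 pp ∧ ∀ i, μ < v0 i → pp ≤ i) :
    (v0 pm - μ) ^ 2 + (v0 pp - μ) ^ 2
        + ∑ i ∈ Finset.univ.filter (fun i : Fin n => (i : ℕ) + 1 < n ∧ i ≠ pm),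
            (v0 i - v0 (i + 1)) ^ 2
      ≤ ∑ m ∈ Finset.Ico t₀ t₁,
          ((1 / 2) * ∑ k, ∑ l,
              (if (G m).Adj k l then ∫ ω, (v m k ω - v m l ω) ^ 2 ∂ℙ else 0)
            + ∑ k ∈ S m, ∫ ω, (v m k ω - μ) ^ 2 ∂ℙ) :=
  stmt18_general n G S μ t₀ t₁ we wm hweMean hwmMean hweL2 hwmL2 v v0 hInit Δ hΔ hDyn hConn hSorted
    hNe pm pp hpm hpp
end
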